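/- arXiv:2206.14622 — 4 statements merged into one kernel-verified Lean document; each statement's English description precedes it below -/
import Mathlib

section
/- Let (∧V, d) be a simply connected Sullivan minimal model over ℚ and let y ∈ V^{2n} be a Gottlieb element of even degree. Then y is a terminal element after a change of basis: there exist an automorphism φ of the graded algebra ∧V with φ(y) = y and a graded complement W of the line ⟨y⟩ in V such that, setting d' = φ⁻¹∘d∘φ (so φ : (∧V, d') → (∧V, d) is an isomorphism of DG algebras), one has d'(y) = dy and d'(V) ⊆ ∧W; in particular y does not appear in the differential d'(w) of any generator w ∈ V. -/
/-! Common definitions: Sullivan minimal models over ℚ, graded derivations, etc. -/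

/-- A bundled graded ℚ-algebra (used as target for universal properties and
formality). -/
structure GCAlg : Type 1 where
  carrier : Type
  [ring : Ring carrier]
  [alg : Algebra ℚ carrier]
  grading : ℤ → Submodule ℚ carrier

attribute [instance] GCAlg.ring GCAlg.alg

variable {A : Type} [Ring A] [Algebra ℚ A]

/-- Graded commutativity with Koszul signs. -/
def GradedComm (𝒜 : ℤ → Submodule ℚ A) : Prop :=
  ∀ i j : ℤ, ∀ a ∈ 𝒜 i, ∀ b ∈ 𝒜 j, a * b = ((-1 : ℚ) ^ (i * j)) • (b * a)

/-- `θ` is a derivation of (lowering) degree `n` of the graded algebra `(A, 𝒜)`: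
it maps `𝒜 i` into `𝒜 (i - n)` and satisfies the graded Leibniz rule. -/
structure IsDegDer (𝒜 : ℤ → Submodule ℚ A) (n : ℤ) (θ : A →ₗ[ℚ] A) : Prop where
  maps_mem : ∀ i : ℤ, ∀ a ∈ 𝒜 i, θ a ∈ 𝒜 (i - n)
  leibniz : ∀ i j : ℤ, ∀ a ∈ 𝒜 i, ∀ b ∈ 𝒜 j,
    θ (a * b) = θ a * b + ((-1 : ℚ) ^ (i * n)) • (a * θ b)

/-- `D θ = [d, θ] = d ∘ θ - (-1)^n θ ∘ d`, for `θ` of lowering degree `n`. -/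
def Dcomm (d θ : A →ₗ[ℚ] A) (n : ℤ) : A →ₗ[ℚ] A :=
  d ∘ₗ θ - ((-1 : ℚ) ^ n) • (θ ∘ₗ d)

/-- A derivation cycle of degree `n`. -/
def IsDerCycle (𝒜 : ℤ → Submodule ℚ A) (d : A →ₗ[ℚ] A) (n : ℤ) (θ : A →ₗ[ℚ] A) : Prop :=
  IsDegDer 𝒜 n θ ∧ Dcomm d θ n = 0

/-- Graded commutator of derivations of degrees `m` and `k`. -/
def gBracket (θ φ : A →ₗ[ℚ] A) (m k : ℤ) : A →ₗ[ℚ] A :=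
  θ ∘ₗ φ - ((-1 : ℚ) ^ (m * k)) • (φ ∘ₗ θ)

/-- The positive-degree part of a graded algebra. -/
def posPart (𝒜 : ℤ → Submodule ℚ A) : Submodule ℚ A := ⨆ i > (0 : ℤ), 𝒜 i

/-- The universal property of the free graded-commutative algebra on `V`. -/
def IsFreeGCA (𝒜 V : ℤ → Submodule ℚ A) : Prop :=
  ∀ B : GCAlg, GradedComm B.grading →
    ∀ f : A →ₗ[ℚ] B.carrier, (∀ n : ℤ, ∀ v ∈ V n, f v ∈ B.grading n) →
      ∃! g : A →ₐ[ℚ] B.carrier, ∀ n : ℤ, ∀ v ∈ V n, g v = f v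

/-- The data of a simply connected Sullivan minimal model `(∧V, d)` over ℚ:
`A` is a graded-commutative graded ℚ-algebra, free on the graded subspace `V`
(with `V⁰ = V¹ = 0`, each `Vⁿ` finite-dimensional), and `d` is a degree `+1`
derivation with `d ∘ d = 0` and decomposable image. -/
structure SullivanData (𝒜 V : ℤ → Submodule ℚ A) (d : A →ₗ[ℚ] A) : Prop where
  gcomm : GradedComm 𝒜
  one_mem : (1 : A) ∈ 𝒜 0
  mul_mem : ∀ i j : ℤ, ∀ a ∈ 𝒜 i, ∀ b ∈ 𝒜 j, a * b ∈ 𝒜 (i + j)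
  internal : DirectSum.IsInternal fun i : ℤ => 𝒜 i
  neg_bot : ∀ i : ℤ, i < 0 → 𝒜 i = ⊥
  V_le : ∀ n : ℤ, V n ≤ 𝒜 n
  V_zero : V 0 = ⊥
  V_one : V 1 = ⊥
  V_fin : ∀ n : ℤ, Module.Finite ℚ (V n)
  gen : Algebra.adjoin ℚ (⋃ n : ℤ, (V n : Set A)) = ⊤
  free : IsFreeGCA 𝒜 V
  d_der : IsDegDer 𝒜 (-1) d
  d_squared : d ∘ₗ d = 0
  d_decomposable : ∀ a : A, d a ∈ posPart 𝒜 * posPart 𝒜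

/-- `W` is a graded complement of the line spanned by `x` (a generator of degree `t`)
inside the graded space of generators `V`. -/
def IsGradedComplement (V : ℤ → Submodule ℚ A) (x : A) (t : ℤ)
    (W : ℤ → Submodule ℚ A) : Prop :=
  (∀ m, W m ≤ V m) ∧ (∀ m, m ≠ t → W m = V m) ∧
  (W t ⊔ Submodule.span ℚ {x} = V t) ∧ (W t ⊓ Submodule.span ℚ {x} = ⊥)

/-- `W` is a graded complement of the two lines spanned by `x` (degree `s`) and
`y` (degree `t`) inside `V`. -/
def IsGradedComplement₂ (V : ℤ → Submodule ℚ A) (x : A) (s : ℤ) (y : A) (t : ℤ)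
    (W : ℤ → Submodule ℚ A) : Prop :=
  (∀ m, W m ≤ V m) ∧ (∀ m, m ≠ s → m ≠ t → W m = V m) ∧
  (W s ⊔ Submodule.span ℚ {x} = V s) ∧ (W s ⊓ Submodule.span ℚ {x} = ⊥) ∧
  (W t ⊔ Submodule.span ℚ {y} = V t) ∧ (W t ⊓ Submodule.span ℚ {y} = ⊥)

/-- The subalgebra `∧W` generated by a graded family of generators `W`. -/
def gradedAdjoin (W : ℤ → Submodule ℚ A) : Subalgebra ℚ A :=
  Algebra.adjoin ℚ (⋃ k : ℤ, (W k : Set A))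

/-- `θ` restricts to a derivation of (lowering) degree `n` of the subalgebra `S`. -/
def IsDegDerOn (𝒜 : ℤ → Submodule ℚ A) (S : Subalgebra ℚ A) (n : ℤ)
    (θ : A →ₗ[ℚ] A) : Prop :=
  (∀ a ∈ S, θ a ∈ S) ∧
  (∀ i : ℤ, ∀ a ∈ S, a ∈ 𝒜 i → θ a ∈ 𝒜 (i - n)) ∧
  (∀ i j : ℤ, ∀ a ∈ S, ∀ b ∈ S, a ∈ 𝒜 i → b ∈ 𝒜 j →
    θ (a * b) = θ a * b + ((-1 : ℚ) ^ (i * n)) • (a * θ b))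

/-- Formality: there is a quasi-isomorphism of DG algebras from `(A, d)` onto a
graded algebra with zero differential (its cohomology). -/
def IsFormal (𝒜 : ℤ → Submodule ℚ A) (d : A →ₗ[ℚ] A) : Prop :=
  ∃ (T : GCAlg) (ρ : A →ₐ[ℚ] T.carrier),
    (∀ i : ℤ, ∀ a ∈ 𝒜 i, ρ a ∈ T.grading i) ∧
    (∀ a : A, ρ (d a) = 0) ∧
    (∀ i : ℤ, ∀ b ∈ T.grading i, ∃ a ∈ 𝒜 i, d a = 0 ∧ ρ a = b) ∧
    (∀ a : A, d a = 0 → ρ a = 0 → ∃ b, a = d b)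

/-- The cohomology of `(A, d)` is finitely generated as a ℚ-algebra. -/
def CohomologyFG (d : A →ₗ[ℚ] A) : Prop :=
  ∃ s : Finset A, (∀ x ∈ s, d x = 0) ∧
    ∀ a : A, d a = 0 → ∃ b ∈ Algebra.adjoin ℚ (s : Set A), a - b ∈ LinearMap.range d

/-! ### Auxiliary infrastructure -/

section Aux

variable {A : Type} [Ring A] [Algebra ℚ A] {𝒜 V : ℤ → Submodule ℚ A} {d : A →ₗ[ℚ] A}

/-- Extraction of graded components: if `a` is homogeneous of degree `i` and lies in a
supremum of submodules `N j ≤ 𝒜 j`, then `a ∈ N i`. -/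
theorem aux_extraction (hint : DirectSum.IsInternal fun i : ℤ => 𝒜 i)
    (N : ℤ → Submodule ℚ A) (hN : ∀ j, N j ≤ 𝒜 j) {i : ℤ} {a : A}
    (ha : a ∈ 𝒜 i) (h : a ∈ ⨆ j, N j) : a ∈ N i := by
  classical
  obtain ⟨f, hf, hsum⟩ := (Submodule.mem_iSup_iff_exists_finsupp N a).1 h
  set e := LinearEquiv.ofBijective (DirectSum.coeLinearMap fun i : ℤ => 𝒜 i) hint with he
  have key : ∀ b : A, ∀ j : ℤ, b ∈ 𝒜 j → ((e.symm b) i : A) = if j = i then b else 0 := by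
    intro b j hb
    by_cases hji : j = i
    · subst hji
      rw [hint.ofBijective_coeLinearMap_of_mem hb]
      simp
    · rw [hint.ofBijective_coeLinearMap_of_mem_ne hji hb]
      simp [hji]
  have h1 : ((e.symm a) i : A) = a := by rw [key a i ha]; simp
  have hsum' : ∑ j ∈ f.support, f j = a := hsum
  have h2 : e.symm a = ∑ j ∈ f.support, e.symm (f j) := by
    rw [← hsum']
    exact map_sum e.symm.toLinearMap (fun j => f j) f.support
  have h3 : ((e.symm a) i : A) = ∑ j ∈ f.support, ((e.symm (f j)) i : A) := by
    rw [h2, DFinsupp.finset_sum_apply]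
    push_cast
    rfl
  have h4 : ∑ j ∈ f.support, ((e.symm (f j)) i : A)
      = ∑ j ∈ f.support, if j = i then f j else 0 :=
    Finset.sum_congr rfl (fun j _ => key (f j) j (hN j (hf j)))
  rw [h4, Finset.sum_ite_eq' f.support i f] at h3
  by_cases hi : i ∈ f.support
  · rw [h1] at h3
    simp only [hi, if_true] at h3
    rw [h3]; exact hf i
  · rw [h1] at h3
    simp only [hi, if_false] at h3
    rw [h3]; exact (N i).zero_mem

/-- Uniqueness: a finite sum of homogeneous components equal to zero has all components zero. -/
theorem aux_uniq_zero (hint : DirectSum.IsInternal fun i : ℤ => 𝒜 i)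
    (f : ℤ →₀ A) (hf : ∀ j, f j ∈ 𝒜 j) (h0 : (f.sum fun _ x => x) = 0) :
    ∀ j, f j = 0 := by
  classical
  intro i
  set e := LinearEquiv.ofBijective (DirectSum.coeLinearMap fun i : ℤ => 𝒜 i) hint with he
  have key : ∀ b : A, ∀ j : ℤ, b ∈ 𝒜 j → ((e.symm b) i : A) = if j = i then b else 0 := by
    intro b j hb
    by_cases hji : j = i
    · subst hji
      rw [hint.ofBijective_coeLinearMap_of_mem hb]
      simp
    · rw [hint.ofBijective_coeLinearMap_of_mem_ne hji hb]
      simp [hji]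
  have hsum' : ∑ j ∈ f.support, f j = 0 := h0
  have h2 : (0 : DirectSum ℤ fun i => 𝒜 i) = ∑ j ∈ f.support, e.symm (f j) := by
    have h2' := map_sum e.symm.toLinearMap (fun j => f j) f.support
    rw [hsum', map_zero] at h2'
    exact h2'
  have h3' : (((0 : DirectSum ℤ fun i => 𝒜 i) i : A)) = ∑ j ∈ f.support, ((e.symm (f j)) i : A) := by
    rw [h2, DFinsupp.finset_sum_apply]
    push_cast
    rfl
  have h3 : (0 : A) = ∑ j ∈ f.support, ((e.symm (f j)) i : A) := by
    simpa using h3'.symm.symm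
  have h4 : ∑ j ∈ f.support, ((e.symm (f j)) i : A)
      = ∑ j ∈ f.support, if j = i then f j else 0 :=
    Finset.sum_congr rfl (fun j _ => key (f j) j (hf j))
  rw [h4, Finset.sum_ite_eq' f.support i f] at h3
  by_cases hi : i ∈ f.support
  · simpa [hi] using h3.symm
  · exact Finsupp.notMem_support_iff.1 hi

/-- Decomposition into homogeneous components. -/
theorem aux_decompose (hint : DirectSum.IsInternal fun i : ℤ => 𝒜 i) (a : A) :
    ∃ f : ℤ →₀ A, (∀ j, f j ∈ 𝒜 j) ∧ (f.sum fun _ x => x) = a := by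
  have : a ∈ ⨆ j, 𝒜 j := by rw [hint.submodule_iSup_eq_top]; trivial
  exact (Submodule.mem_iSup_iff_exists_finsupp 𝒜 a).1 this

end Aux
section Aux2

variable {A : Type} [Ring A] [Algebra ℚ A] {𝒜 V : ℤ → Submodule ℚ A} {d : A →ₗ[ℚ] A}

theorem aux_adjoin_trick (hS : SullivanData 𝒜 V d) (N : ℤ → Submodule ℚ A)
    (hN : ∀ i, N i ≤ 𝒜 i) (hone : (1 : A) ∈ N 0)
    (hmul : ∀ i j : ℤ, ∀ a ∈ N i, ∀ b ∈ N j, a * b ∈ N (i + j))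
    (hV : ∀ m, V m ≤ N m) : ∀ i, 𝒜 i ≤ N i := by
  have hmulS : ∀ x ∈ (⨆ j, N j), ∀ z ∈ (⨆ j, N j), x * z ∈ (⨆ j, N j) := by
    intro x hx
    refine Submodule.iSup_induction N
      (motive := fun x => ∀ z ∈ (⨆ j, N j), x * z ∈ (⨆ j, N j)) hx ?_ ?_ ?_
    · intro i a ha z hz
      refine Submodule.iSup_induction N (motive := fun z => a * z ∈ (⨆ j, N j)) hz ?_ ?_ ?_
      · intro j b hb
        exact Submodule.mem_iSup_of_mem (i + j) (hmul i j a ha b hb)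
      · show a * 0 ∈ _
        rw [mul_zero]; exact zero_mem _
      · intro b c hb hc
        show a * (b + c) ∈ _
        rw [mul_add]; exact add_mem hb hc
    · intro z _; rw [zero_mul]; exact zero_mem _
    · intro x1 x2 h1 h2 z hz; rw [add_mul]; exact add_mem (h1 z hz) (h2 z hz)
  let T : Subalgebra ℚ A :=
    { carrier := ((⨆ j, N j : Submodule ℚ A) : Set A)
      mul_mem' := fun {a b} ha hb => hmulS a ha b hb
      one_mem' := Submodule.mem_iSup_of_mem 0 hone
      add_mem' := fun {a b} ha hb => add_mem ha hb
      algebraMap_mem' := fun r => by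
        show algebraMap ℚ A r ∈ (⨆ j, N j)
        rw [Algebra.algebraMap_eq_smul_one]
        exact Submodule.smul_mem _ r (Submodule.mem_iSup_of_mem 0 hone) }
  have htop : ∀ x : A, x ∈ (⨆ j, N j) := by
    intro x
    have hx : x ∈ Algebra.adjoin ℚ (⋃ n : ℤ, (V n : Set A)) := by rw [hS.gen]; trivial
    have hle : Algebra.adjoin ℚ (⋃ n : ℤ, (V n : Set A)) ≤ T := by
      refine Algebra.adjoin_le ?_
      intro v hv
      rcases Set.mem_iUnion.1 hv with ⟨m, hm⟩
      exact Submodule.mem_iSup_of_mem m (hV m hm)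
    exact hle hx
  intro i a ha
  exact aux_extraction hS.internal N hN ha (htop a)

/-- Subalgebra generated by generators of degree `≤ t`. -/
noncomputable def adjIic (V : ℤ → Submodule ℚ A) (t : ℤ) : Subalgebra ℚ A :=
  Algebra.adjoin ℚ (⋃ k ∈ Set.Iic t, (V k : Set A))

theorem adjIic_mono {s t : ℤ} (h : s ≤ t) : adjIic V s ≤ adjIic V t := by
  apply Algebra.adjoin_mono
  intro x hx
  simp only [Set.mem_iUnion] at hx ⊢
  obtain ⟨k, hk, hxk⟩ := hx
  exact ⟨k, le_trans hk h, hxk⟩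

theorem mem_adjIic_self {m t : ℤ} (h : m ≤ t) {v : A} (hv : v ∈ V m) : v ∈ adjIic V t := by
  apply Algebra.subset_adjoin
  simp only [Set.mem_iUnion]
  exact ⟨m, h, hv⟩

theorem aux_deg_facts (hS : SullivanData 𝒜 V d) :
    (𝒜 0 ≤ Submodule.span ℚ {(1 : A)}) ∧ (𝒜 1 = ⊥) ∧
      (∀ i t : ℤ, i ≤ t → 𝒜 i ≤ (adjIic V t).toSubmodule) := by
  set N : ℤ → Submodule ℚ A := fun i =>
    if i < 0 then ⊥ else if i = 0 then Submodule.span ℚ {(1 : A)}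
      else if i = 1 then ⊥ else 𝒜 i ⊓ (adjIic V i).toSubmodule with hNdef
  have hNneg : ∀ i, i < 0 → N i = ⊥ := fun i hi => by simp [hNdef, hi]
  have hN0 : N 0 = Submodule.span ℚ {(1 : A)} := by norm_num [hNdef]
  have hN1 : N 1 = ⊥ := by norm_num [hNdef]
  have hN2 : ∀ i : ℤ, 2 ≤ i → N i = 𝒜 i ⊓ (adjIic V i).toSubmodule := fun i hi => by
    have h1 : ¬ i < 0 := by omega
    have h2 : i ≠ 0 := by omega
    have h3 : i ≠ 1 := by omega
    simp [hNdef, h1, h2, h3]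
  have hN : ∀ i, N i ≤ 𝒜 i := by
    intro i
    rcases lt_trichotomy i 0 with hi | hi | hi
    · rw [hNneg i hi]; exact bot_le
    · subst hi; rw [hN0, Submodule.span_le]
      intro x hx; rw [Set.mem_singleton_iff] at hx; subst hx; exact hS.one_mem
    · by_cases hi1 : i = 1
      · subst hi1; rw [hN1]; exact bot_le
      · rw [hN2 i (by omega)]; exact inf_le_left
  have key := aux_adjoin_trick hS N hN
    (by rw [hN0]; exact Submodule.mem_span_singleton_self 1)
    (by
      intro i j a ha b hb
      rcases lt_trichotomy i 0 with hi | hi | hi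
      · rw [hNneg i hi] at ha
        simp only [Submodule.mem_bot] at ha; subst ha; rw [zero_mul]; exact zero_mem _
      · subst hi
        rw [hN0] at ha
        obtain ⟨c, rfl⟩ := Submodule.mem_span_singleton.1 ha
        rw [smul_mul_assoc, one_mul, zero_add]
        exact Submodule.smul_mem _ c hb
      · rcases lt_trichotomy j 0 with hj | hj | hj
        · rw [hNneg j hj] at hb
          simp only [Submodule.mem_bot] at hb; subst hb; rw [mul_zero]; exact zero_mem _
        · subst hj
          rw [hN0] at hb
          obtain ⟨c, rfl⟩ := Submodule.mem_span_singleton.1 hb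
          rw [mul_smul_comm, mul_one, add_zero]
          exact Submodule.smul_mem _ c ha
        · by_cases hi1 : i = 1
          · subst hi1; rw [hN1] at ha
            simp only [Submodule.mem_bot] at ha; subst ha; rw [zero_mul]; exact zero_mem _
          · by_cases hj1 : j = 1
            · subst hj1; rw [hN1] at hb
              simp only [Submodule.mem_bot] at hb; subst hb; rw [mul_zero]; exact zero_mem _
            · rw [hN2 i (by omega)] at ha
              rw [hN2 j (by omega)] at hb
              rw [hN2 (i + j) (by omega)]
              refine ⟨hS.mul_mem i j a ha.1 b hb.1, ?_⟩
              exact Subalgebra.mul_mem _ (adjIic_mono (by omega : i ≤ i + j) ha.2)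
                (adjIic_mono (by omega : j ≤ i + j) hb.2))
    (by
      intro m
      rcases lt_trichotomy m 0 with hm | hm | hm
      · rw [hNneg m hm]
        have := hS.neg_bot m hm
        rw [← this]; exact hS.V_le m
      · subst hm; rw [hS.V_zero]; exact bot_le
      · by_cases hm1 : m = 1
        · subst hm1; rw [hS.V_one]; exact bot_le
        · rw [hN2 m (by omega)]
          exact le_inf (hS.V_le m) (fun v hv => mem_adjIic_self le_rfl hv))
  refine ⟨by rw [← hN0]; exact key 0, le_bot_iff.1 (by rw [← hN1]; exact key 1), ?_⟩
  intro i t hit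
  rcases lt_trichotomy i 0 with hi | hi | hi
  · rw [hS.neg_bot i hi]; exact bot_le
  · subst hi
    refine le_trans (key 0) ?_
    rw [hN0, Submodule.span_le]
    intro x hx; rw [Set.mem_singleton_iff] at hx; subst hx
    exact Subalgebra.one_mem _
  · by_cases hi1 : i = 1
    · subst hi1
      refine le_trans (key 1) ?_
      rw [hN1]; exact bot_le
    · refine le_trans (key i) ?_
      rw [hN2 i (by omega)]
      exact le_trans inf_le_right (fun x hx => adjIic_mono hit hx)

end Aux2
section Aux3

variable {A : Type} [Ring A] [Algebra ℚ A] {𝒜 V : ℤ → Submodule ℚ A} {d : A →ₗ[ℚ] A}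

theorem aux_fg_finset_sup (s : Finset ℤ) (p : ℤ → Submodule ℚ A)
    (h : ∀ j ∈ s, (p j).FG) : (s.sup p).FG := by
  classical
  induction s using Finset.induction_on with
  | empty => simpa using Submodule.fg_bot
  | insert _ _ hx ih =>
    rw [Finset.sup_insert]
    exact Submodule.FG.sup (h _ (Finset.mem_insert_self _ _))
      (ih fun j hj => h j (Finset.mem_insert_of_mem hj))

set_option maxHeartbeats 1000000 in
set_option synthInstance.maxHeartbeats 400000 in
theorem aux_findim (hS : SullivanData 𝒜 V d) : ∀ i : ℤ, FiniteDimensional ℚ (𝒜 i) := by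
  classical
  obtain ⟨hd0, hd1, _⟩ := aux_deg_facts hS
  set N : ℤ → Submodule ℚ A := fun i =>
    if i < 0 then ⊥ else if i = 0 then Submodule.span ℚ {(1 : A)}
      else if i = 1 then ⊥
      else 𝒜 i ⊓ (V i ⊔ (Finset.Ioo (0 : ℤ) i).sup (fun j => 𝒜 j * 𝒜 (i - j))) with hNdef
  have hNneg : ∀ i, i < 0 → N i = ⊥ := fun i hi => by simp [hNdef, hi]
  have hN0 : N 0 = Submodule.span ℚ {(1 : A)} := by norm_num [hNdef]
  have hN1 : N 1 = ⊥ := by norm_num [hNdef]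
  have hN2 : ∀ i : ℤ, 2 ≤ i →
      N i = 𝒜 i ⊓ (V i ⊔ (Finset.Ioo (0 : ℤ) i).sup (fun j => 𝒜 j * 𝒜 (i - j))) := by
    intro i hi
    have h1 : ¬ i < 0 := by omega
    have h2 : i ≠ 0 := by omega
    have h3 : i ≠ 1 := by omega
    simp [hNdef, h1, h2, h3]
  have hN : ∀ i, N i ≤ 𝒜 i := by
    intro i
    rcases lt_trichotomy i 0 with hi | hi | hi
    · rw [hNneg i hi]; exact bot_le
    · subst hi; rw [hN0, Submodule.span_le]
      intro x hx; rw [Set.mem_singleton_iff] at hx; subst hx; exact hS.one_mem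
    · by_cases hi1 : i = 1
      · subst hi1; rw [hN1]; exact bot_le
      · rw [hN2 i (by omega)]; exact inf_le_left
  have key := aux_adjoin_trick hS N hN
    (by rw [hN0]; exact Submodule.mem_span_singleton_self 1)
    (by
      intro i j a ha b hb
      rcases lt_trichotomy i 0 with hi | hi | hi
      · rw [hNneg i hi] at ha
        simp only [Submodule.mem_bot] at ha; subst ha; rw [zero_mul]; exact zero_mem _
      · subst hi
        rw [hN0] at ha
        obtain ⟨c, rfl⟩ := Submodule.mem_span_singleton.1 ha
        rw [smul_mul_assoc, one_mul, zero_add]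
        exact Submodule.smul_mem _ c hb
      · rcases lt_trichotomy j 0 with hj | hj | hj
        · rw [hNneg j hj] at hb
          simp only [Submodule.mem_bot] at hb; subst hb; rw [mul_zero]; exact zero_mem _
        · subst hj
          rw [hN0] at hb
          obtain ⟨c, rfl⟩ := Submodule.mem_span_singleton.1 hb
          rw [mul_smul_comm, mul_one, add_zero]
          exact Submodule.smul_mem _ c ha
        · by_cases hi1 : i = 1
          · subst hi1; rw [hN1] at ha
            simp only [Submodule.mem_bot] at ha; subst ha; rw [zero_mul]; exact zero_mem _
          · by_cases hj1 : j = 1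
            · subst hj1; rw [hN1] at hb
              simp only [Submodule.mem_bot] at hb; subst hb; rw [mul_zero]; exact zero_mem _
            · rw [hN2 i (by omega)] at ha
              rw [hN2 j (by omega)] at hb
              rw [hN2 (i + j) (by omega)]
              refine ⟨hS.mul_mem i j a ha.1 b hb.1, ?_⟩
              apply Submodule.mem_sup_right
              have hmm : a * b ∈ 𝒜 i * 𝒜 (i + j - i) := by
                rw [show i + j - i = j by ring]
                exact Submodule.mul_mem_mul ha.1 hb.1
              have hle : 𝒜 i * 𝒜 (i + j - i) ≤
                  (Finset.Ioo (0 : ℤ) (i + j)).sup (fun k => 𝒜 k * 𝒜 (i + j - k)) :=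
                Finset.le_sup (f := fun k => 𝒜 k * 𝒜 (i + j - k)) (show i ∈ Finset.Ioo (0 : ℤ) (i + j) by
                  rw [Finset.mem_Ioo]; constructor <;> omega)
              exact hle hmm)
    (by
      intro m
      rcases lt_trichotomy m 0 with hm | hm | hm
      · rw [hNneg m hm]
        have := hS.neg_bot m hm
        rw [← this]; exact hS.V_le m
      · subst hm; rw [hS.V_zero]; exact bot_le
      · by_cases hm1 : m = 1
        · subst hm1; rw [hS.V_one]; exact bot_le
        · rw [hN2 m (by omega)]
          refine le_inf (hS.V_le m) ?_
          exact le_sup_left)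
  have span1fin : FiniteDimensional ℚ (Submodule.span ℚ {(1 : A)}) :=
    Module.Finite.iff_fg.2 (Submodule.fg_span_singleton 1)
  have main : ∀ K : ℕ, ∀ i : ℤ, i ≤ (K : ℤ) → FiniteDimensional ℚ (𝒜 i) := by
    intro K
    induction K with
    | zero =>
      intro i hi
      rcases lt_or_eq_of_le hi with hi' | hi'
      · rw [hS.neg_bot i (by exact_mod_cast hi')]
        infer_instance
      · rw [hi']
        exact Submodule.finiteDimensional_of_le hd0
    | succ K IH =>
      intro i hi
      by_cases hiK : i ≤ (K : ℤ)
      · exact IH i hiK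
      · have hieq : i = (K : ℤ) + 1 := by omega
        by_cases hK0 : K = 0
        · subst hK0
          have : i = 1 := by omega
          rw [this, hd1]
          infer_instance
        · have hige2 : 2 ≤ i := by omega
          have hle : 𝒜 i ≤ V i ⊔ (Finset.Ioo (0 : ℤ) i).sup (fun j => 𝒜 j * 𝒜 (i - j)) :=
            le_trans (key i) (by rw [hN2 i hige2]; exact inf_le_right)
          have hVfg : (V i).FG := by
            haveI := hS.V_fin i
            exact Module.Finite.iff_fg.1 (hS.V_fin i)
          have hsupfg : ((Finset.Ioo (0 : ℤ) i).sup (fun j => 𝒜 j * 𝒜 (i - j))).FG := by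
            apply aux_fg_finset_sup
            intro j hj
            rw [Finset.mem_Ioo] at hj
            have h1 : FiniteDimensional ℚ (𝒜 j) := IH j (by omega)
            have h2 : FiniteDimensional ℚ (𝒜 (i - j)) := IH (i - j) (by omega)
            exact Submodule.FG.mul (Module.Finite.iff_fg.1 h1) (Module.Finite.iff_fg.1 h2)
          haveI : FiniteDimensional ℚ
              ↥(V i ⊔ (Finset.Ioo (0 : ℤ) i).sup (fun j => 𝒜 j * 𝒜 (i - j))) :=
            Module.Finite.iff_fg.2 (Submodule.FG.sup hVfg hsupfg)
          exact Submodule.finiteDimensional_of_le hle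
  intro i
  rcases le_or_gt i 0 with hi | hi
  · exact main 0 i (by exact_mod_cast hi)
  · exact main i.toNat i (by omega)

end Aux3
section Aux4

variable {A : Type} [Ring A] [Algebra ℚ A] {𝒜 V : ℤ → Submodule ℚ A} {d : A →ₗ[ℚ] A}
variable {n : ℕ} {θ : A →ₗ[ℚ] A} {y : A}

theorem aux_even_sign (i : ℤ) (n : ℕ) : ((-1 : ℚ) ^ (i * (2 * (n : ℤ)))) = 1 :=
  Even.neg_one_zpow ⟨i * n, by ring⟩

theorem aux_htop (hS : SullivanData 𝒜 V d) (x : A) : x ∈ ⨆ j, 𝒜 j := by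
  rw [hS.internal.submodule_iSup_eq_top]; trivial

theorem aux_theta_mul (hS : SullivanData 𝒜 V d)
    (hθd : IsDegDer 𝒜 (2 * (n : ℤ)) θ) :
    ∀ a b : A, θ (a * b) = θ a * b + a * θ b := by
  intro a b
  refine Submodule.iSup_induction 𝒜
    (motive := fun a => ∀ b : A, θ (a * b) = θ a * b + a * θ b) (aux_htop hS a) ?_ ?_ ?_ b
  · intro i a ha
    intro b
    refine Submodule.iSup_induction 𝒜
      (motive := fun b => θ (a * b) = θ a * b + a * θ b) (aux_htop hS b) ?_ ?_ ?_
    · intro j b hb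
      rw [hθd.leibniz i j a ha b hb, aux_even_sign i n, one_smul]
    · show θ (a * 0) = θ a * 0 + a * θ 0
      simp
    · intro x1 x2 h1 h2
      show θ (a * (x1 + x2)) = θ a * (x1 + x2) + a * θ (x1 + x2)
      rw [mul_add, map_add, h1, h2, map_add, mul_add, mul_add]
      abel
  · intro b; simp
  · intro x1 x2 h1 h2 b
    rw [add_mul, map_add, h1 b, h2 b, map_add, add_mul, add_mul]
    abel

theorem aux_d_one (hS : SullivanData 𝒜 V d) : d 1 = 0 := by
  have := hS.d_der.leibniz 0 0 1 hS.one_mem 1 hS.one_mem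
  simp only [mul_one, one_mul] at this
  have h1 : ((-1 : ℚ) ^ ((0 : ℤ) * (-1 : ℤ))) = 1 := by norm_num
  rw [h1, one_smul] at this
  have h2 : d 1 + 0 = d 1 + d 1 := by rw [add_zero]; exact this
  exact (add_left_cancel h2).symm

theorem aux_theta_one (hS : SullivanData 𝒜 V d)
    (hθd : IsDegDer 𝒜 (2 * (n : ℤ)) θ) : θ 1 = 0 := by
  have := aux_theta_mul hS hθd 1 1
  simp only [mul_one, one_mul] at this
  have h2 : θ 1 + 0 = θ 1 + θ 1 := by rw [add_zero]; exact this
  exact (add_left_cancel h2).symm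

theorem aux_dtheta (hθ : IsDerCycle 𝒜 d (2 * (n : ℤ)) θ) :
    ∀ x : A, d (θ x) = θ (d x) := by
  intro x
  have h := LinearMap.ext_iff.1 hθ.2 x
  simp only [Dcomm, LinearMap.sub_apply, LinearMap.comp_apply, LinearMap.smul_apply,
    LinearMap.zero_apply] at h
  have hsign : ((-1 : ℚ) ^ ((2 * (n : ℤ)))) = 1 := Even.neg_one_zpow ⟨(n : ℤ), by ring⟩
  rw [hsign, one_smul, sub_eq_zero] at h
  exact h

theorem aux_y_central (hS : SullivanData 𝒜 V d) (hy𝒜 : y ∈ 𝒜 (2 * (n : ℤ))) :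
    ∀ c : A, y * c = c * y := by
  intro c
  refine Submodule.iSup_induction 𝒜
    (motive := fun c => y * c = c * y) (aux_htop hS c) ?_ ?_ ?_
  · intro j b hb
    rw [hS.gcomm _ j y hy𝒜 b hb]
    have : ((-1 : ℚ) ^ ((2 * (n : ℤ)) * j)) = 1 := Even.neg_one_zpow ⟨(n : ℤ) * j, by ring⟩
    rw [this, one_smul]
  · simp
  · intro x1 x2 h1 h2
    rw [mul_add, add_mul, h1, h2]

theorem aux_theta_pow (hS : SullivanData 𝒜 V d)
    (hθd : IsDegDer 𝒜 (2 * (n : ℤ)) θ) (hθy : θ y = 1) :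
    ∀ k : ℕ, θ (y ^ (k + 1)) = ((k : ℚ) + 1) • y ^ k := by
  intro k
  induction k with
  | zero => simpa using hθy
  | succ k IH =>
    have : y ^ (k + 2) = y * y ^ (k + 1) := (pow_succ' y (k + 1))
    rw [this, aux_theta_mul hS hθd y (y ^ (k + 1)), hθy, one_mul, IH, mul_smul_comm]
    rw [← pow_succ' y k]
    push_cast
    module

theorem aux_pow_mem (hS : SullivanData 𝒜 V d) (hy𝒜 : y ∈ 𝒜 (2 * (n : ℤ))) :
    ∀ k : ℕ, y ^ k ∈ 𝒜 ((k : ℤ) * (2 * (n : ℤ))) := by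
  intro k
  induction k with
  | zero => simpa using hS.one_mem
  | succ k IH =>
    rw [pow_succ y k]
    have := hS.mul_mem _ _ _ IH _ hy𝒜
    have heq : ((k : ℤ) * (2 * (n : ℤ)) + 2 * (n : ℤ)) = ((k : ℤ) + 1) * (2 * (n : ℤ)) := by ring
    rw [heq] at this
    exact_mod_cast this

theorem aux_theta_iter_mem (hθd : IsDegDer 𝒜 (2 * (n : ℤ)) θ) {i : ℤ} {a : A}
    (ha : a ∈ 𝒜 i) : ∀ k : ℕ, (θ ^ k) a ∈ 𝒜 (i - (k : ℤ) * (2 * (n : ℤ))) := by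
  intro k
  induction k with
  | zero => simpa using ha
  | succ k IH =>
    have h : (θ ^ (k + 1)) a = θ ((θ ^ k) a) := by
      rw [pow_succ']
      rfl
    rw [h]
    have := hθd.maps_mem _ _ IH
    have heq : (i - (k : ℤ) * (2 * (n : ℤ)) - 2 * (n : ℤ)) = i - ((k : ℤ) + 1) * (2 * (n : ℤ)) := by
      ring
    rw [heq] at this
    exact_mod_cast this

theorem aux_theta_nilp (hS : SullivanData 𝒜 V d) (hθd : IsDegDer 𝒜 (2 * (n : ℤ)) θ)
    {i : ℤ} {a : A} (ha : a ∈ 𝒜 i) {k : ℕ} (hk : i < (k : ℤ) * (2 * (n : ℤ))) :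
    (θ ^ k) a = 0 := by
  have h := aux_theta_iter_mem hθd ha k
  rw [hS.neg_bot _ (by omega)] at h
  simpa using h

end Aux4
section Aux5

variable {A : Type} [Ring A] [Algebra ℚ A] {𝒜 V : ℤ → Submodule ℚ A} {d : A →ₗ[ℚ] A}
variable {n : ℕ} {θ : A →ₗ[ℚ] A} {y : A}

/-- Truncated exponential-type operator `∑ (-1)^k/k! yᵏ θᵏ`. -/
noncomputable def Eaux (y : A) (θ : A →ₗ[ℚ] A) (M : ℕ) : A →ₗ[ℚ] A :=
  ∑ k ∈ Finset.range (M + 1),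
    ((-1 : ℚ) ^ k / k.factorial) • (LinearMap.mulLeft ℚ (y ^ k) ∘ₗ θ ^ k)

theorem Eaux_apply (M : ℕ) (a : A) :
    Eaux y θ M a = ∑ k ∈ Finset.range (M + 1),
      ((-1 : ℚ) ^ k / k.factorial) • (y ^ k * (θ ^ k) a) := by
  simp [Eaux, LinearMap.sum_apply, LinearMap.smul_apply, LinearMap.comp_apply,
    LinearMap.mulLeft_apply]

/-- The global operator `E`, assembled from truncations via the internal grading. -/
noncomputable def Emap (𝒜 : ℤ → Submodule ℚ A)
    (hint : DirectSum.IsInternal fun i : ℤ => 𝒜 i) (y : A) (θ : A →ₗ[ℚ] A) : A →ₗ[ℚ] A :=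
  (DirectSum.toModule ℚ ℤ A fun i => Eaux y θ (i.toNat + 1) ∘ₗ (𝒜 i).subtype) ∘ₗ
    (LinearEquiv.ofBijective (DirectSum.coeLinearMap fun i : ℤ => 𝒜 i) hint).symm.toLinearMap

theorem Emap_homog (hint : DirectSum.IsInternal fun i : ℤ => 𝒜 i) {i : ℤ} {a : A}
    (ha : a ∈ 𝒜 i) : Emap 𝒜 hint y θ a = Eaux y θ (i.toNat + 1) a := by
  set e := LinearEquiv.ofBijective (DirectSum.coeLinearMap fun i : ℤ => 𝒜 i) hint with he
  have h1 : e.symm a = DirectSum.lof ℚ ℤ (fun i => (𝒜 i : Type)) i ⟨a, ha⟩ := by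
    rw [LinearEquiv.symm_apply_eq]
    rw [he]; change a = (DirectSum.coeLinearMap fun i => 𝒜 i) (DirectSum.lof ℚ ℤ (fun i => (𝒜 i : Type)) i ⟨a, ha⟩)
    rw [DirectSum.lof_eq_of, DirectSum.coeLinearMap_of]
  show (DirectSum.toModule ℚ ℤ A fun i => Eaux y θ (i.toNat + 1) ∘ₗ (𝒜 i).subtype)
      (e.symm a) = _
  rw [h1, DirectSum.toModule_lof]
  rfl

/-- Iterates of `θ` vanish beyond the truncation bound. -/
theorem aux_iter_vanish (hS : SullivanData 𝒜 V d) (hθd : IsDegDer 𝒜 (2 * (n : ℤ)) θ)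
    (hn : 1 ≤ n) {i : ℤ} {a : A} (ha : a ∈ 𝒜 i) {k : ℕ} (hk : i.toNat + 1 ≤ k) :
    (θ ^ k) a = 0 := by
  refine aux_theta_nilp hS hθd ha ?_
  have h1 : (k : ℤ) * 2 ≤ (k : ℤ) * (2 * (n : ℤ)) := by
    have : (2 : ℤ) ≤ 2 * (n : ℤ) := by omega
    exact mul_le_mul_of_nonneg_left this (by positivity)
  have h2 : i < (k : ℤ) * 2 := by
    have : i ≤ (i.toNat : ℤ) := Int.self_le_toNat i
    omega
  linarith

theorem aux_E_eq_sum (hS : SullivanData 𝒜 V d) (hθd : IsDegDer 𝒜 (2 * (n : ℤ)) θ)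
    (hn : 1 ≤ n) {i : ℤ} {a : A} (ha : a ∈ 𝒜 i) {M : ℕ} (hM : i.toNat + 1 ≤ M) :
    Emap 𝒜 hS.internal y θ a = ∑ k ∈ Finset.range (M + 1),
      ((-1 : ℚ) ^ k / k.factorial) • (y ^ k * (θ ^ k) a) := by
  rw [Emap_homog hS.internal ha, Eaux_apply]
  refine Finset.sum_subset ?_ ?_
  · intro x hx
    rw [Finset.mem_range] at hx ⊢
    omega
  · intro x _ hx
    rw [Finset.mem_range, not_lt] at hx
    rw [aux_iter_vanish hS hθd hn ha (by omega : i.toNat + 1 ≤ x)]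
    simp

theorem aux_E_mem (hS : SullivanData 𝒜 V d) (hθd : IsDegDer 𝒜 (2 * (n : ℤ)) θ)
    (hy𝒜 : y ∈ 𝒜 (2 * (n : ℤ))) {i : ℤ} {a : A} (ha : a ∈ 𝒜 i) :
    Emap 𝒜 hS.internal y θ a ∈ 𝒜 i := by
  rw [Emap_homog hS.internal ha, Eaux_apply]
  refine Submodule.sum_mem _ ?_
  intro k _
  refine Submodule.smul_mem _ _ ?_
  have h1 := aux_pow_mem hS hy𝒜 k
  have h2 := aux_theta_iter_mem hθd ha k
  have := hS.mul_mem _ _ _ h1 _ h2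
  rwa [show (k : ℤ) * (2 * (n : ℤ)) + (i - (k : ℤ) * (2 * (n : ℤ))) = i by ring] at this

theorem aux_E_fix (hS : SullivanData 𝒜 V d) {i : ℤ} {a : A}
    (ha : a ∈ 𝒜 i) (h0 : θ a = 0) : Emap 𝒜 hS.internal y θ a = a := by
  rw [Emap_homog hS.internal ha, Eaux_apply, Finset.sum_range_succ']
  have hz : ∀ k : ℕ, (θ ^ (k + 1)) a = 0 := by
    intro k
    rw [pow_succ, Module.End.mul_apply, h0, map_zero]
  simp [hz]

theorem aux_E_y (hS : SullivanData 𝒜 V d) (hθd : IsDegDer 𝒜 (2 * (n : ℤ)) θ)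
    (hθy : θ y = 1) (hy𝒜 : y ∈ 𝒜 (2 * (n : ℤ))) (hn : 1 ≤ n) :
    Emap 𝒜 hS.internal y θ y = 0 := by
  rw [Emap_homog hS.internal hy𝒜, Eaux_apply]
  have hz : ∀ k : ℕ, (θ ^ (k + 2)) y = 0 := by
    intro k
    have h2 : (θ ^ (k + 2)) y = (θ ^ k) ((θ ^ 2) y) := by
      rw [show k + 2 = k + 2 by rfl, pow_add, Module.End.mul_apply]
    have h3 : (θ ^ 2) y = 0 := by
      rw [show (2 : ℕ) = 1 + 1 by rfl, pow_add, Module.End.mul_apply, pow_one, hθy]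
      exact aux_theta_one hS hθd
    rw [h2, h3, map_zero]
  have hsub : ∑ k ∈ Finset.range ((2 * (n : ℤ)).toNat + 1 + 1),
      ((-1 : ℚ) ^ k / k.factorial) • (y ^ k * (θ ^ k) y)
      = ∑ k ∈ Finset.range 2, ((-1 : ℚ) ^ k / k.factorial) • (y ^ k * (θ ^ k) y) := by
    refine (Finset.sum_subset ?_ ?_).symm
    · intro x hx
      rw [Finset.mem_range] at hx ⊢
      omega
    · intro x _ hx
      rw [Finset.mem_range, not_lt] at hx
      obtain ⟨m, rfl⟩ : ∃ m, x = m + 2 := ⟨x - 2, by omega⟩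
      rw [hz m]
      simp
  rw [hsub]
  rw [Finset.sum_range_succ, Finset.sum_range_one]
  simp [hθy]

theorem aux_E_sub_mem (hS : SullivanData 𝒜 V d) {i : ℤ} {a : A} (ha : a ∈ 𝒜 i) :
    Emap 𝒜 hS.internal y θ a - a ∈ LinearMap.range (LinearMap.mulLeft ℚ y) := by
  rw [Emap_homog hS.internal ha, Eaux_apply, Finset.sum_range_succ']
  have h0 : ((-1 : ℚ) ^ 0 / (Nat.factorial 0 : ℚ)) • (y ^ 0 * (θ ^ 0) a) = a := by
    simp
  rw [h0, add_sub_cancel_right]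
  refine Submodule.sum_mem _ ?_
  intro k _
  have : ((-1 : ℚ) ^ (k + 1) / (k + 1).factorial) • (y ^ (k + 1) * (θ ^ (k + 1)) a)
      = y * (((-1 : ℚ) ^ (k + 1) / (k + 1).factorial) • (y ^ k * (θ ^ (k + 1)) a)) := by
    rw [mul_smul_comm, pow_succ' y k, mul_assoc]
  rw [this]
  exact ⟨_, rfl⟩

end Aux5
section Aux6

variable {A : Type} [Ring A] [Algebra ℚ A] {𝒜 V : ℤ → Submodule ℚ A} {d : A →ₗ[ℚ] A}
variable {n : ℕ} {θ : A →ₗ[ℚ] A} {y : A}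

theorem aux_coeff_succ (k : ℕ) :
    ((-1 : ℚ) ^ (k + 1) / (k + 1).factorial) * ((k : ℚ) + 1) = -((-1 : ℚ) ^ k / k.factorial) := by
  have h1 : ((k + 1).factorial : ℚ) = ((k : ℚ) + 1) * (k.factorial : ℚ) := by
    rw [Nat.factorial_succ]; push_cast; ring
  have h2 : (k.factorial : ℚ) ≠ 0 := by
    exact_mod_cast Nat.factorial_ne_zero k
  have h3 : ((k : ℚ) + 1) ≠ 0 := by positivity
  field_simp [h1]
  rw [h1]; ring

theorem aux_iter_succ (m : ℕ) (x : A) : θ ((θ ^ m) x) = (θ ^ (m + 1)) x := by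
  rw [pow_succ']
  rfl

/-- `θ ∘ E = 0`. -/
theorem aux_E_theta (hS : SullivanData 𝒜 V d) (hθd : IsDegDer 𝒜 (2 * (n : ℤ)) θ)
    (hθy : θ y = 1) (hn : 1 ≤ n) {i : ℤ} {a : A} (ha : a ∈ 𝒜 i) :
    θ (Emap 𝒜 hS.internal y θ a) = 0 := by
  set M := i.toNat + 1 with hM
  set G : ℕ → A := fun k => ((-1 : ℚ) ^ k / k.factorial) • (y ^ k * (θ ^ (k + 1)) a) with hG
  rw [Emap_homog hS.internal ha, Eaux_apply, map_sum]
  have hterm : ∀ k : ℕ, θ (((-1 : ℚ) ^ k / k.factorial) • (y ^ k * (θ ^ k) a))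
      = G k - (if k = 0 then 0 else G (k - 1)) := by
    intro k
    rw [map_smul, aux_theta_mul hS hθd]
    cases k with
    | zero =>
      simp only [pow_zero, one_mul, Nat.factorial_zero]
      rw [aux_theta_one hS hθd, zero_mul, zero_add]
      simp [hG]
    | succ k =>
      rw [aux_theta_pow hS hθd hθy k, aux_iter_succ]
      rw [if_neg (Nat.succ_ne_zero k)]
      have hre : (((-1 : ℚ) ^ (k + 1) / (k + 1).factorial)) •
          ((((k : ℚ) + 1) • y ^ k) * (θ ^ (k + 1)) a + y ^ (k + 1) * (θ ^ (k + 2)) a)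
          = (((-1 : ℚ) ^ (k + 1) / (k + 1).factorial) * ((k : ℚ) + 1)) •
              (y ^ k * (θ ^ (k + 1)) a)
            + ((-1 : ℚ) ^ (k + 1) / (k + 1).factorial) • (y ^ (k + 1) * (θ ^ (k + 2)) a) := by
        rw [smul_add, smul_mul_assoc, smul_smul]
      rw [hre, aux_coeff_succ k, neg_smul]
      simp only [hG, Nat.succ_sub_one]
      abel
  rw [Finset.sum_congr rfl (fun k _ => hterm k)]
  rw [Finset.sum_sub_distrib]
  have hshift : ∑ k ∈ Finset.range (M + 1), (if k = 0 then 0 else G (k - 1))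
      = ∑ k ∈ Finset.range M, G k := by
    rw [Finset.sum_range_succ']
    simp
  rw [hshift, Finset.sum_range_succ, add_sub_assoc]
  have hlast : G M = 0 := by
    simp only [hG]
    rw [aux_iter_vanish hS hθd hn ha (by omega : i.toNat + 1 ≤ M + 1)]
    simp
  rw [hlast]
  simp [hM]

/-- Key vanishing lemma: a homogeneous `θ`-cycle in `y·A` is zero. -/
theorem aux_Z (hS : SullivanData 𝒜 V d) (hθd : IsDegDer 𝒜 (2 * (n : ℤ)) θ)
    (hθy : θ y = 1) (hy𝒜 : y ∈ 𝒜 (2 * (n : ℤ))) (hn : 1 ≤ n)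
    {s : ℤ} {z : A} (hz : z ∈ 𝒜 s) (h0 : θ z = 0)
    (hzy : z ∈ LinearMap.range (LinearMap.mulLeft ℚ y)) : z = 0 := by
  classical
  -- Step 1: replace the cofactor by a homogeneous one.
  obtain ⟨t₀, ht₀⟩ := hzy
  set N : ℤ → Submodule ℚ A :=
    fun r => Submodule.map (LinearMap.mulLeft ℚ y) (𝒜 (r - 2 * (n : ℤ))) with hN
  have hNle : ∀ r, N r ≤ 𝒜 r := by
    intro r x hx
    obtain ⟨c, hc, rfl⟩ := hx
    have := hS.mul_mem _ _ _ hy𝒜 _ hc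
    rwa [show 2 * (n : ℤ) + (r - 2 * (n : ℤ)) = r by ring] at this
  have hzsup : z ∈ ⨆ r, N r := by
    obtain ⟨f, hf, hsum⟩ := aux_decompose hS.internal t₀
    have hsum' : ∑ j ∈ f.support, f j = t₀ := hsum
    have : z = ∑ j ∈ f.support, y * f j := by
      rw [← Finset.mul_sum, hsum']
      exact ht₀.symm
    rw [this]
    refine Submodule.sum_mem _ ?_
    intro j _
    refine Submodule.mem_iSup_of_mem (j + 2 * (n : ℤ)) ?_
    refine ⟨f j, ?_, rfl⟩
    rw [show j + 2 * (n : ℤ) - 2 * (n : ℤ) = j by ring]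
    exact hf j
  obtain ⟨t, ht, htz⟩ := aux_extraction hS.internal N hNle hz hzsup
  -- now `z = y * t` with `t` homogeneous of degree `s - 2n`.
  subst htz
  simp only [LinearMap.mulLeft_apply] at h0 ⊢
  -- Step 2: `t = -(y * θ t)` and its iterates.
  have h1 : t + y * θ t = 0 := by
    have := aux_theta_mul hS hθd y t
    rw [hθy, one_mul] at this
    rw [← this, h0]
  have claim1 : ∀ k : ℕ, ((k : ℚ) + 1) • ((θ ^ k) t) = -(y * (θ ^ (k + 1)) t) := by
    intro k
    induction k with
    | zero =>
      simp only [Nat.cast_zero, zero_add, one_smul, pow_zero, Module.End.one_apply, pow_one]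
      exact eq_neg_of_add_eq_zero_left h1
    | succ k IH =>
      have h := congrArg θ IH
      rw [map_smul, map_neg, aux_theta_mul hS hθd, hθy, one_mul, aux_iter_succ,
        aux_iter_succ] at h
      have hstep : ((k : ℚ) + 1 + 1) • ((θ ^ (k + 1)) t)
          = ((k : ℚ) + 1) • ((θ ^ (k + 1)) t) + (θ ^ (k + 1)) t := by
        module
      rw [show ((k : ℕ) + 1 : ℕ) = k + 1 by rfl]
      push_cast
      rw [hstep, h]
      abel
  have claim2 : ∀ k : ℕ, ((k.factorial : ℚ)) • t = ((-1 : ℚ) ^ k) • (y ^ k * (θ ^ k) t) := by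
    intro k
    induction k with
    | zero => simp
    | succ k IH =>
      have hfact : (((k + 1).factorial : ℚ)) = ((k : ℚ) + 1) * (k.factorial : ℚ) := by
        rw [Nat.factorial_succ]; push_cast; ring
      calc (((k + 1).factorial : ℚ)) • t
          = ((k : ℚ) + 1) • ((k.factorial : ℚ) • t) := by rw [hfact, mul_smul]
        _ = ((k : ℚ) + 1) • (((-1 : ℚ) ^ k) • (y ^ k * (θ ^ k) t)) := by rw [IH]
        _ = ((-1 : ℚ) ^ k) • (y ^ k * (((k : ℚ) + 1) • (θ ^ k) t)) := by
            rw [smul_comm, mul_smul_comm]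
        _ = ((-1 : ℚ) ^ k) • (y ^ k * -(y * (θ ^ (k + 1)) t)) := by rw [claim1 k]
        _ = ((-1 : ℚ) ^ (k + 1)) • (y ^ (k + 1) * (θ ^ (k + 1)) t) := by
            rw [mul_neg, smul_neg, ← mul_assoc, ← pow_succ y k, ← neg_smul,
              pow_succ (-1 : ℚ) k, mul_neg_one]
  -- Step 3: kill `t`.
  have hvan : (θ ^ (s.toNat + 1)) t = 0 :=
    aux_iter_vanish hS hθd hn ht (by omega)
  have := claim2 (s.toNat + 1)
  rw [hvan, mul_zero, smul_zero] at this
  have hne : (((s.toNat + 1).factorial : ℚ)) ≠ 0 := by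
    exact_mod_cast Nat.factorial_ne_zero _
  have ht0 : t = 0 := by
    have := congrArg (fun x => (((s.toNat + 1).factorial : ℚ))⁻¹ • x) this
    simpa [smul_smul, inv_mul_cancel₀ hne] using this
  rw [ht0, mul_zero]

theorem aux_E_mul (hS : SullivanData 𝒜 V d) (hθd : IsDegDer 𝒜 (2 * (n : ℤ)) θ)
    (hθy : θ y = 1) (hy𝒜 : y ∈ 𝒜 (2 * (n : ℤ))) (hn : 1 ≤ n)
    {i j : ℤ} {a b : A} (ha : a ∈ 𝒜 i) (hb : b ∈ 𝒜 j) :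
    Emap 𝒜 hS.internal y θ (a * b)
      = Emap 𝒜 hS.internal y θ a * Emap 𝒜 hS.internal y θ b := by
  set E := Emap 𝒜 hS.internal y θ with hE
  set z := E (a * b) - E a * E b with hz
  have hmem : z ∈ 𝒜 (i + j) := by
    refine sub_mem (aux_E_mem hS hθd hy𝒜 (hS.mul_mem i j a ha b hb)) ?_
    exact hS.mul_mem i j _ (aux_E_mem hS hθd hy𝒜 ha) _ (aux_E_mem hS hθd hy𝒜 hb)
  have hθz : θ z = 0 := by
    rw [hz, map_sub, aux_E_theta hS hθd hθy hn (hS.mul_mem i j a ha b hb),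
      aux_theta_mul hS hθd, aux_E_theta hS hθd hθy hn ha, aux_E_theta hS hθd hθy hn hb]
    simp
  have hyA : z ∈ LinearMap.range (LinearMap.mulLeft ℚ y) := by
    have hrmul : ∀ x ∈ LinearMap.range (LinearMap.mulLeft ℚ y), ∀ c : A,
        x * c ∈ LinearMap.range (LinearMap.mulLeft ℚ y) := by
      rintro x ⟨r, rfl⟩ c
      exact ⟨r * c, by simp [LinearMap.mulLeft_apply, mul_assoc]⟩
    have hlmul : ∀ x ∈ LinearMap.range (LinearMap.mulLeft ℚ y), ∀ c : A,
        c * x ∈ LinearMap.range (LinearMap.mulLeft ℚ y) := by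
      rintro x ⟨r, rfl⟩ c
      refine ⟨c * r, ?_⟩
      simp only [LinearMap.mulLeft_apply]
      rw [aux_y_central hS hy𝒜 (c * r), mul_assoc, aux_y_central hS hy𝒜 r]
    have hkey : z = (E (a * b) - a * b) - ((E a - a) * E b) - (a * (E b - b)) := by
      rw [hz]
      rw [sub_mul, mul_sub]
      abel
    rw [hkey]
    refine sub_mem (sub_mem (aux_E_sub_mem hS (hS.mul_mem i j a ha b hb)) ?_) ?_
    · exact hrmul _ (aux_E_sub_mem hS ha) _
    · exact hlmul _ (aux_E_sub_mem hS hb) _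
  exact sub_eq_zero.mp (aux_Z hS hθd hθy hy𝒜 hn hmem hθz hyA)

theorem aux_E_mul_global (hS : SullivanData 𝒜 V d) (hθd : IsDegDer 𝒜 (2 * (n : ℤ)) θ)
    (hθy : θ y = 1) (hy𝒜 : y ∈ 𝒜 (2 * (n : ℤ))) (hn : 1 ≤ n) (a b : A) :
    Emap 𝒜 hS.internal y θ (a * b)
      = Emap 𝒜 hS.internal y θ a * Emap 𝒜 hS.internal y θ b := by
  set E := Emap 𝒜 hS.internal y θ with hE
  refine Submodule.iSup_induction 𝒜
    (motive := fun a => ∀ b : A, E (a * b) = E a * E b) (aux_htop hS a) ?_ ?_ ?_ b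
  · intro i a ha
    intro b
    refine Submodule.iSup_induction 𝒜
      (motive := fun b => E (a * b) = E a * E b) (aux_htop hS b) ?_ ?_ ?_
    · intro j b hb
      exact aux_E_mul hS hθd hθy hy𝒜 hn ha hb
    · show E (a * 0) = E a * E 0
      simp
    · intro x1 x2 h1 h2
      show E (a * (x1 + x2)) = E a * E (x1 + x2)
      rw [mul_add, map_add, h1, h2, map_add, mul_add]
  · intro b; simp
  · intro x1 x2 h1 h2 b
    rw [add_mul, map_add, h1 b, h2 b, map_add, add_mul]

theorem aux_E_one (hS : SullivanData 𝒜 V d) (hθd : IsDegDer 𝒜 (2 * (n : ℤ)) θ) :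
    Emap 𝒜 hS.internal y θ (1 : A) = 1 :=
  aux_E_fix hS hS.one_mem (aux_theta_one hS hθd)

end Aux6
/-- An even-degree Gottlieb element `y ∈ V^{2n}` of a simply
connected Sullivan minimal model is terminal after a change of basis. -/
theorem statement0 (A : Type) [Ring A] [Algebra ℚ A]
    (𝒜 V : ℤ → Submodule ℚ A) (d : A →ₗ[ℚ] A)
    (hS : SullivanData 𝒜 V d)
    (n : ℕ) (y : A) (hy : y ∈ V (2 * (n : ℤ)))
    (θ : A →ₗ[ℚ] A) (hθ : IsDerCycle 𝒜 d (2 * (n : ℤ)) θ) (hθy : θ y = 1) :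
    ∃ φ : A ≃ₐ[ℚ] A, (∀ i : ℤ, ∀ a ∈ 𝒜 i, φ a ∈ 𝒜 i) ∧ φ y = y ∧
      ∃ W : ℤ → Submodule ℚ A, IsGradedComplement V y (2 * (n : ℤ)) W ∧
        (φ.symm.toLinearMap ∘ₗ d ∘ₗ φ.toLinearMap) y = d y ∧
        ∀ m : ℤ, ∀ v ∈ V m,
          (φ.symm.toLinearMap ∘ₗ d ∘ₗ φ.toLinearMap) v ∈ gradedAdjoin W := by
  classical
  by_cases hA : (1 : A) = 0
  · -- the trivial-algebra case
    have hall : ∀ x : A, x = 0 := fun x => by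
      calc x = x * 1 := (mul_one x).symm
        _ = x * 0 := by rw [hA]
        _ = 0 := mul_zero x
    refine ⟨AlgEquiv.refl, fun i a ha => ha, rfl, V, ⟨fun m => le_rfl, fun m _ => rfl, ?_, ?_⟩,
      ?_, ?_⟩
    · refine sup_eq_left.2 ?_
      rw [Submodule.span_le, Set.singleton_subset_iff]
      exact hy
    · rw [Submodule.eq_bot_iff]
      intro x _
      exact hall x
    · rfl
    · intro m v hv
      have h0 : (AlgEquiv.refl.symm.toLinearMap ∘ₗ d ∘ₗ
          (AlgEquiv.refl (R := ℚ) (A₁ := A)).toLinearMap) v = 0 := hall _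
      rw [h0]
      exact Subalgebra.zero_mem _
  · -- the main case
    have hθd : IsDegDer 𝒜 (2 * (n : ℤ)) θ := hθ.1
    have hn : 1 ≤ n := by
      by_contra hn0
      have hn' : n = 0 := by omega
      subst hn'
      have h0 : y ∈ V 0 := by simpa using hy
      rw [hS.V_zero] at h0
      simp only [Submodule.mem_bot] at h0
      rw [h0, map_zero] at hθy
      exact hA hθy.symm
    have hy𝒜 : y ∈ 𝒜 (2 * (n : ℤ)) := hS.V_le _ hy
    obtain ⟨hd0, hd1, hdadj⟩ := aux_deg_facts hS
    -- the graded complement `W2` of `⟨y⟩` inside `V^{2n}`, and the functional `lam`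
    set W2 : Submodule ℚ A := V (2 * (n : ℤ)) ⊓ LinearMap.ker θ with hW2def
    set Nc : ℤ → Submodule ℚ A := fun m => if m = 2 * (n : ℤ) then W2 else 𝒜 m with hNcdef
    have hNcle : ∀ m, Nc m ≤ 𝒜 m := by
      intro m
      by_cases hm : m = 2 * (n : ℤ)
      · subst hm
        simp only [hNcdef, if_pos rfl]
        exact le_trans inf_le_left (hS.V_le _)
      · simp only [hNcdef, if_neg hm]
        exact le_rfl
    set C₀ : Submodule ℚ A := ⨆ m, Nc m with hC₀def
    have hyC : y ∉ C₀ := by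
      intro hyc
      have := aux_extraction hS.internal Nc hNcle hy𝒜 hyc
      rw [hNcdef] at this
      simp only [if_pos rfl] at this
      have hθy0 : θ y = 0 := this.2
      rw [hθy0] at hθy
      exact hA hθy.symm
    have hybar : C₀.mkQ y ≠ 0 := by
      intro h0
      exact hyC ((Submodule.Quotient.mk_eq_zero C₀).1 h0)
    obtain ⟨D, hD⟩ := Submodule.exists_isCompl (Submodule.span ℚ {C₀.mkQ y})
    set pr := Submodule.linearProjOfIsCompl _ D hD with hprdef
    set co : (Submodule.span ℚ {C₀.mkQ y}) ≃ₗ[ℚ] ℚ :=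
      (LinearEquiv.toSpanNonzeroSingleton ℚ _ _ hybar).symm with hcodef
    set lam : A →ₗ[ℚ] ℚ := co.toLinearMap ∘ₗ pr ∘ₗ C₀.mkQ with hlamdef
    set q : A →ₗ[ℚ] A := (LinearMap.toSpanSingleton ℚ A y) ∘ₗ lam with hqdef
    have hq_apply : ∀ x : A, q x = lam x • y := fun x => rfl
    have hlam_y : lam y = 1 := by
      have h1 : pr (C₀.mkQ y) =
          ⟨C₀.mkQ y, Submodule.mem_span_singleton_self _⟩ :=
        Submodule.linearProjOfIsCompl_apply_left hD
          ⟨C₀.mkQ y, Submodule.mem_span_singleton_self _⟩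
      have h2 : (LinearEquiv.toSpanNonzeroSingleton ℚ _ _ hybar) 1 =
          ⟨C₀.mkQ y, Submodule.mem_span_singleton_self _⟩ := by
        apply Subtype.ext
        rw [LinearEquiv.toSpanNonzeroSingleton_apply]; exact one_smul _ _
      show co (pr (C₀.mkQ y)) = 1
      rw [h1, ← h2, hcodef]
      exact LinearEquiv.symm_apply_apply _ 1
    have hq_y : q y = y := by rw [hq_apply, hlam_y, one_smul]
    have hlam_C0 : ∀ x ∈ C₀, lam x = 0 := by
      intro x hx
      show co (pr (C₀.mkQ x)) = 0
      have : C₀.mkQ x = 0 := (Submodule.Quotient.mk_eq_zero C₀).2 hx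
      rw [this, map_zero, map_zero]
    have hq_Vm : ∀ m : ℤ, m ≠ 2 * (n : ℤ) → ∀ v ∈ V m, q v = 0 := by
      intro m hm v hv
      have hvC : v ∈ C₀ := by
        refine Submodule.mem_iSup_of_mem m ?_
        simp only [hNcdef, if_neg hm]
        exact hS.V_le m hv
      rw [hq_apply, hlam_C0 v hvC, zero_smul]
    have hq_W2 : ∀ w ∈ W2, q w = 0 := by
      intro w hw
      have hwC : w ∈ C₀ := by
        refine Submodule.mem_iSup_of_mem (2 * (n : ℤ)) ?_
        simp only [hNcdef, if_pos rfl]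
        exact hw
      rw [hq_apply, hlam_C0 w hwC, zero_smul]
    have hq_span : ∀ x ∈ Submodule.span ℚ {y}, q x = x := by
      intro x hx
      obtain ⟨c, rfl⟩ := Submodule.mem_span_singleton.1 hx
      rw [map_smul, hq_y]
    -- the algebra endomorphisms ψ and π
    set E := Emap 𝒜 hS.internal y θ with hEdef
    set B : GCAlg := { carrier := A, grading := 𝒜 } with hBdef
    have hf : ∀ m : ℤ, ∀ v ∈ V m, (E + q) v ∈ 𝒜 m := by
      intro m v hv
      simp only [LinearMap.add_apply]
      refine Submodule.add_mem _ (aux_E_mem hS hθd hy𝒜 (hS.V_le m hv)) ?_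
      by_cases hm : m = 2 * (n : ℤ)
      · subst hm
        rw [hq_apply]
        exact Submodule.smul_mem _ _ hy𝒜
      · rw [hq_Vm m hm v hv]
        exact Submodule.zero_mem _
    obtain ⟨ψ, hψV, -⟩ := hS.free B hS.gcomm (E + q) hf
    have hfπ : ∀ m : ℤ, ∀ v ∈ V m, (LinearMap.id (R := ℚ) (M := A) - q) v ∈ 𝒜 m := by
      intro m v hv
      simp only [LinearMap.sub_apply, LinearMap.id_apply]
      refine Submodule.sub_mem _ (hS.V_le m hv) ?_
      by_cases hm : m = 2 * (n : ℤ)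
      · subst hm
        rw [hq_apply]
        exact Submodule.smul_mem _ _ hy𝒜
      · rw [hq_Vm m hm v hv]
        exact Submodule.zero_mem _
    obtain ⟨π, hπV, -⟩ := hS.free B hS.gcomm (LinearMap.id (R := ℚ) (M := A) - q) hfπ
    have hψapp : ∀ m : ℤ, ∀ v ∈ V m, ψ v = E v + q v := by
      intro m v hv
      have := hψV m v hv
      simpa using this
    have hπapp : ∀ m : ℤ, ∀ v ∈ V m, π v = v - q v := by
      intro m v hv
      have := hπV m v hv
      simpa using this
    have hψy : ψ y = y := by
      rw [hψapp _ y hy, hEdef, aux_E_y hS hθd hθy hy𝒜 hn, zero_add, hq_y]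
    -- ψ preserves the grading
    have hψgr : ∀ i : ℤ, ∀ a ∈ 𝒜 i, ψ a ∈ 𝒜 i := by
      have key := aux_adjoin_trick hS
        (fun i => 𝒜 i ⊓ Submodule.comap ψ.toLinearMap (𝒜 i))
        (fun i => inf_le_left)
        ⟨hS.one_mem, by
          show ψ 1 ∈ 𝒜 0
          rw [map_one]; exact hS.one_mem⟩
        (by
          intro i j a ha b hb
          refine ⟨hS.mul_mem i j a ha.1 b hb.1, ?_⟩
          show ψ (a * b) ∈ 𝒜 (i + j)
          rw [map_mul]
          exact hS.mul_mem i j _ ha.2 _ hb.2)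
        (by
          intro m v hv
          refine ⟨hS.V_le m hv, ?_⟩
          show ψ v ∈ 𝒜 m
          rw [hψapp m v hv]
          exact hf m v hv)
      intro i a ha
      exact ((key i) ha).2
    -- ψ is surjective
    have hyr : y ∈ ψ.range := ⟨y, hψy⟩
    have hrange : ∀ K : ℕ, ∀ m : ℤ, m ≤ (K : ℤ) → ∀ v ∈ V m, v ∈ ψ.range := by
      intro K
      induction K with
      | zero =>
        intro m hm v hv
        have hv0 : v = 0 := by
          rcases lt_or_eq_of_le hm with hm' | hm'
          · have := hS.V_le m hv
            rw [hS.neg_bot m (by exact_mod_cast hm')] at this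
            simpa using this
          · rw [hm'] at hv
            norm_num at hv
            rw [hS.V_zero] at hv
            simpa using hv
        rw [hv0]
        exact Subalgebra.zero_mem _
      | succ K IH =>
        intro m hm v hv
        by_cases hmK : m ≤ (K : ℤ)
        · exact IH m hmK v hv
        · have hmeq : m = (K : ℤ) + 1 := by omega
          have hadjK : (adjIic V (K : ℤ)) ≤ ψ.range := by
            refine Algebra.adjoin_le ?_
            intro x hx
            simp only [Set.mem_iUnion] at hx
            obtain ⟨k, hk, hxk⟩ := hx
            exact IH k hk x hxk
          have hEv := aux_E_eq_sum (y := y) hS hθd hn (hS.V_le m hv) (M := m.toNat + 1) le_rfl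
          rw [Finset.sum_range_succ'] at hEv
          have h00 : ((-1 : ℚ) ^ 0 / (Nat.factorial 0 : ℚ)) • (y ^ 0 * (θ ^ 0) v) = v := by
            simp
          rw [h00] at hEv
          set T := ∑ k ∈ Finset.range (m.toNat + 1),
            ((-1 : ℚ) ^ (k + 1) / ((k + 1).factorial : ℚ)) • (y ^ (k + 1) * (θ ^ (k + 1)) v)
            with hTdef
          have hT : T ∈ ψ.range := by
            refine Subalgebra.sum_mem _ ?_
            intro k _
            refine Subalgebra.smul_mem _ ?_ _
            refine Subalgebra.mul_mem _ (pow_mem hyr (k + 1)) ?_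
            have hθkv := aux_theta_iter_mem hθd (hS.V_le m hv) (k + 1)
            have hprod : (2 : ℤ) ≤ ((k : ℤ) + 1) * (2 * (n : ℤ)) := by
              calc (2 : ℤ) = 1 * 2 := by ring
                _ ≤ ((k : ℤ) + 1) * (2 * (n : ℤ)) := by
                    apply mul_le_mul (by omega) (by omega) (by norm_num) (by positivity)
            have hle : m - ((k : ℤ) + 1) * (2 * (n : ℤ)) ≤ (K : ℤ) := by omega
            have := hdadj _ _ hle hθkv
            exact hadjK this
          have hvT : v = ψ v - T - lam v • y := by
            rw [hψapp m v hv, hEdef, hEv, hq_apply]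
            abel
          rw [hvT]
          refine Subalgebra.sub_mem _ (Subalgebra.sub_mem _ ⟨v, rfl⟩ hT) ?_
          exact Subalgebra.smul_mem _ hyr _
    have hsurj : Function.Surjective ψ := by
      intro x
      have hx : x ∈ Algebra.adjoin ℚ (⋃ n : ℤ, (V n : Set A)) := by rw [hS.gen]; trivial
      have hle : Algebra.adjoin ℚ (⋃ n : ℤ, (V n : Set A)) ≤ ψ.range := by
        refine Algebra.adjoin_le ?_
        intro w hw
        rcases Set.mem_iUnion.1 hw with ⟨m, hm⟩
        exact hrange m.toNat m (Int.self_le_toNat m) w hm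
      exact hle hx
    -- ψ is injective
    have hpsur : ∀ i : ℤ, ∀ a ∈ 𝒜 i, ∃ b ∈ 𝒜 i, ψ b = a := by
      intro i a ha
      obtain ⟨x, hx⟩ := hsurj a
      obtain ⟨f, hfmem, hfsum⟩ := aux_decompose hS.internal x
      have hsum' : ∑ j ∈ f.support, f j = x := hfsum
      have hasum : a = ∑ j ∈ f.support, ψ (f j) := by
        rw [← hx, ← hsum', map_sum]
      have hmem : a ∈ ⨆ j, Submodule.map ψ.toLinearMap (𝒜 j) := by
        rw [hasum]
        refine Submodule.sum_mem _ ?_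
        intro j _
        exact Submodule.mem_iSup_of_mem j ⟨f j, hfmem j, rfl⟩
      have := aux_extraction hS.internal (fun j => Submodule.map ψ.toLinearMap (𝒜 j))
        (fun j x hx => by
          obtain ⟨c, hc, rfl⟩ := hx
          exact hψgr j c hc) ha hmem
      obtain ⟨b, hb, hba⟩ := this
      exact ⟨b, hb, hba⟩
    have hinj : Function.Injective ψ := by
      have hker : ∀ x : A, ψ x = 0 → x = 0 := by
        intro x hx
        obtain ⟨f, hfmem, hfsum⟩ := aux_decompose hS.internal x
        set g : ℤ →₀ A := Finsupp.mapRange (fun a => ψ a) (map_zero ψ) f with hgdef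
        have hgmem : ∀ j, g j ∈ 𝒜 j := by
          intro j
          simp only [hgdef, Finsupp.mapRange_apply]
          exact hψgr j _ (hfmem j)
        have hgsum : (g.sum fun _ x => x) = 0 := by
          rw [hgdef, Finsupp.sum_mapRange_index (by simp)]
          have : (f.sum fun _ a => ψ a) = ψ (f.sum fun _ a => a) := by
            rw [map_finsuppSum]
          rw [this, hfsum, hx]
        have hg0 := aux_uniq_zero hS.internal g hgmem hgsum
        have hf0 : ∀ j, f j = 0 := by
          intro j
          haveI := aux_findim hS j
          set ψj : 𝒜 j →ₗ[ℚ] 𝒜 j :=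
            LinearMap.restrict ψ.toLinearMap (fun x hx => hψgr j x hx) with hψjdef
          have hψjsur : Function.Surjective ψj := by
            rintro ⟨a, ha⟩
            obtain ⟨b, hb, hba⟩ := hpsur j a ha
            exact ⟨⟨b, hb⟩, Subtype.ext hba⟩
          have hψjinj : Function.Injective ψj :=
            (LinearMap.injective_iff_surjective).2 hψjsur
          have h1 : ψj ⟨f j, hfmem j⟩ = ψj ⟨0, (𝒜 j).zero_mem⟩ := by
            apply Subtype.ext
            show ψ (f j) = ψ 0
            rw [map_zero]
            have := hg0 j
            simpa [hgdef, Finsupp.mapRange_apply] using this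
          have := hψjinj h1
          simpa using congrArg Subtype.val this
        have : x = ∑ j ∈ f.support, f j := hfsum.symm
        rw [this]
        exact Finset.sum_eq_zero fun j _ => hf0 j
      intro a b hab
      have : ψ (a - b) = 0 := by rw [map_sub, hab, sub_self]
      have := hker _ this
      exact sub_eq_zero.1 this
    -- assemble the algebra automorphism
    set φ : A ≃ₐ[ℚ] A := AlgEquiv.ofBijective ψ ⟨hinj, hsurj⟩ with hφdef
    have hφcoe : ∀ x : A, φ x = ψ x := fun x => rfl
    -- the graded complement W
    set W : ℤ → Submodule ℚ A := fun m => if m = 2 * (n : ℤ) then W2 else V m with hWdef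
    have hWsup : W (2 * (n : ℤ)) ⊔ Submodule.span ℚ {y} = V (2 * (n : ℤ)) := by
      simp only [hWdef, if_pos rfl]
      refine le_antisymm (sup_le inf_le_left ?_) ?_
      · rw [Submodule.span_le, Set.singleton_subset_iff]
        exact hy
      · intro v hv
        have hθv : θ v ∈ 𝒜 0 := by
          have := hθd.maps_mem _ v (hS.V_le _ hv)
          rwa [show (2 * (n : ℤ) - 2 * (n : ℤ)) = 0 by ring] at this
        obtain ⟨c, hc⟩ := Submodule.mem_span_singleton.1 (hd0 hθv)
        have h1 : v - c • y ∈ W2 := by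
          refine ⟨Submodule.sub_mem _ hv (Submodule.smul_mem _ c hy), ?_⟩
          show v - c • y ∈ LinearMap.ker θ
          rw [LinearMap.mem_ker, map_sub, map_smul, hθy, ← hc]
          simp
        have h2 : c • y ∈ Submodule.span ℚ {y} :=
          Submodule.smul_mem _ c (Submodule.mem_span_singleton_self y)
        have : v = (v - c • y) + c • y := by abel
        rw [this]
        exact Submodule.add_mem_sup h1 h2
    have hWinf : W (2 * (n : ℤ)) ⊓ Submodule.span ℚ {y} = ⊥ := by
      simp only [hWdef, if_pos rfl]
      rw [Submodule.eq_bot_iff]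
      rintro x ⟨hxW, hxs⟩
      obtain ⟨c, rfl⟩ := Submodule.mem_span_singleton.1 hxs
      have hθx : θ (c • y) = 0 := hxW.2
      rw [map_smul, hθy] at hθx
      by_cases hc : c = 0
      · rw [hc, zero_smul]
      · exfalso
        have : (1 : A) = 0 := by
          have := congrArg (fun z => c⁻¹ • z) hθx
          simpa [smul_smul, inv_mul_cancel₀ hc] using this
        exact hA this
    have hgc : IsGradedComplement V y (2 * (n : ℤ)) W := by
      refine ⟨?_, ?_, hWsup, hWinf⟩
      · intro m
        by_cases hm : m = 2 * (n : ℤ)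
        · subst hm
          simp only [hWdef, if_pos rfl]
          exact inf_le_left
        · simp only [hWdef, if_neg hm]
          exact le_rfl
      · intro m hm
        simp only [hWdef, if_neg hm]
    -- d y is decomposable in low degrees
    have hdy𝒜 : d y ∈ 𝒜 (2 * (n : ℤ) + 1) := by
      have := hS.d_der.maps_mem _ y hy𝒜
      rwa [show (2 * (n : ℤ) - (-1)) = 2 * (n : ℤ) + 1 by ring] at this
    have hdy_adj : d y ∈ (adjIic V (2 * (n : ℤ) - 1)).toSubmodule := by
      set Q : ℤ → Submodule ℚ A :=
        fun s => ⨆ i ∈ Set.Ioo (0 : ℤ) s, 𝒜 i * 𝒜 (s - i) with hQdef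
      have hQle : ∀ s, Q s ≤ 𝒜 s := by
        intro s
        refine iSup₂_le ?_
        intro i hi
        refine Submodule.mul_le.2 ?_
        intro a ha b hb
        have := hS.mul_mem _ _ a ha b hb
        rwa [show i + (s - i) = s by ring] at this
      have hPP : posPart 𝒜 * posPart 𝒜 ≤ ⨆ s, Q s := by
        refine Submodule.mul_le.2 ?_
        intro a ha b hb
        refine Submodule.iSup_induction (fun i => ⨆ (_ : i > (0 : ℤ)), 𝒜 i)
          (motive := fun a => ∀ b ∈ posPart 𝒜, a * b ∈ ⨆ s, Q s) ha ?_ ?_ ?_ b hb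
        · intro i a' ha'
          by_cases hi : (0 : ℤ) < i
          · replace ha' : a' ∈ 𝒜 i := by
              have h' : a' ∈ ⨆ (_ : (0 : ℤ) < i), 𝒜 i := ha'
              rwa [iSup_pos hi] at h'
            intro b hb
            refine Submodule.iSup_induction (fun j => ⨆ (_ : j > (0 : ℤ)), 𝒜 j)
              (motive := fun b => a' * b ∈ ⨆ s, Q s) hb ?_ ?_ ?_
            · intro j b' hb'
              by_cases hj : (0 : ℤ) < j
              · replace hb' : b' ∈ 𝒜 j := by
                  have h' : b' ∈ ⨆ (_ : (0 : ℤ) < j), 𝒜 j := hb'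
                  rwa [iSup_pos hj] at h'
                refine Submodule.mem_iSup_of_mem (i + j) ?_
                have hmm : a' * b' ∈ 𝒜 i * 𝒜 ((i + j) - i) := by
                  rw [show i + j - i = j by ring]
                  exact Submodule.mul_mem_mul ha' hb'
                have hmemIoo : i ∈ Set.Ioo (0 : ℤ) (i + j) := Set.mem_Ioo.2 ⟨hi, by omega⟩
                show a' * b' ∈ ⨆ i' ∈ Set.Ioo (0 : ℤ) (i + j), 𝒜 i' * 𝒜 ((i + j) - i')
                refine Submodule.mem_iSup_of_mem i ?_
                refine Submodule.mem_iSup_of_mem hmemIoo ?_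
                exact hmm
              · replace hb' : b' ∈ (⊥ : Submodule ℚ A) := by
                  have h' : b' ∈ ⨆ (_ : (0 : ℤ) < j), 𝒜 j := hb'
                  rwa [iSup_neg hj] at h'
                simp only [Submodule.mem_bot] at hb'
                subst hb'
                rw [mul_zero]
                exact zero_mem _
            · show a' * 0 ∈ _
              rw [mul_zero]; exact zero_mem _
            · intro x1 x2 h1 h2
              show a' * (x1 + x2) ∈ _
              rw [mul_add]; exact add_mem h1 h2
          · replace ha' : a' ∈ (⊥ : Submodule ℚ A) := by
              have h' : a' ∈ ⨆ (_ : (0 : ℤ) < i), 𝒜 i := ha'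
              rwa [iSup_neg hi] at h'
            simp only [Submodule.mem_bot] at ha'
            subst ha'
            intro b _
            rw [zero_mul]; exact zero_mem _
        · intro b _; rw [zero_mul]; exact zero_mem _
        · intro x1 x2 h1 h2 b hb
          rw [add_mul]; exact add_mem (h1 b hb) (h2 b hb)
      have hdyQ : d y ∈ Q (2 * (n : ℤ) + 1) :=
        aux_extraction hS.internal Q hQle hdy𝒜 (hPP (hS.d_decomposable y))
      have hQadj : Q (2 * (n : ℤ) + 1) ≤ (adjIic V (2 * (n : ℤ) - 1)).toSubmodule := by
        refine iSup₂_le ?_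
        intro i hi
        rw [Set.mem_Ioo] at hi
        refine Submodule.mul_le.2 ?_
        intro a ha b hb
        by_cases hi1 : i = 1
        · subst hi1
          rw [hd1] at ha
          simp only [Submodule.mem_bot] at ha
          subst ha
          rw [zero_mul]; exact zero_mem _
        · by_cases hi2 : 2 * (n : ℤ) + 1 - i = 1
          · rw [hi2, hd1] at hb
            simp only [Submodule.mem_bot] at hb
            subst hb
            rw [mul_zero]; exact zero_mem _
          · have ha' : a ∈ (adjIic V (2 * (n : ℤ) - 1)).toSubmodule :=
              hdadj i _ (by omega) ha
            have hb' : b ∈ (adjIic V (2 * (n : ℤ) - 1)).toSubmodule :=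
              hdadj (2 * (n : ℤ) + 1 - i) _ (by omega) hb
            exact Subalgebra.mul_mem _ ha' hb'
      exact hQadj hdyQ
    -- ψ is the identity on the subalgebra generated by low degrees
    have hlow : ∀ x ∈ adjIic V (2 * (n : ℤ) - 1), ψ x = x := by
      intro x hx
      refine Algebra.adjoin_induction (hx := hx) ?_ ?_ ?_ ?_
      · intro v hv
        simp only [Set.mem_iUnion] at hv
        obtain ⟨k, hk, hvk⟩ := hv
        have hk' : k ≤ 2 * (n : ℤ) - 1 := hk
        have hθv : θ v = 0 := by
          have := hθd.maps_mem k v (hS.V_le k hvk)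
          rw [hS.neg_bot _ (by omega : k - 2 * (n : ℤ) < 0)] at this
          simpa using this
        rw [hψapp k v hvk, hEdef, aux_E_fix hS (hS.V_le k hvk) hθv,
          hq_Vm k (by omega) v hvk, add_zero]
      · intro r
        exact ψ.commutes r
      · intro a b _ _ ha hb
        rw [map_add, ha, hb]
      · intro a b _ _ ha hb
        rw [map_mul, ha, hb]
    -- π lands in the subalgebra generated by W
    have hπ_adj : ∀ x : A, π x ∈ gradedAdjoin W := by
      intro x
      have hx : x ∈ Algebra.adjoin ℚ (⋃ n : ℤ, (V n : Set A)) := by rw [hS.gen]; trivial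
      refine Algebra.adjoin_induction (hx := hx) ?_ ?_ ?_ ?_
      · intro v hv
        obtain ⟨m, hvm⟩ := Set.mem_iUnion.1 hv
        by_cases hm : m = 2 * (n : ℤ)
        · subst hm
          have hv' : v ∈ W (2 * (n : ℤ)) ⊔ Submodule.span ℚ {y} := by
            rw [hWsup]; exact hvm
          obtain ⟨w, hw, x', hx', rfl⟩ := Submodule.mem_sup.1 hv'
          have hw2 : w ∈ W2 := by
            have : W (2 * (n : ℤ)) = W2 := by simp [hWdef]
            rwa [this] at hw
          rw [hπapp _ _ hvm, map_add, hq_W2 w hw2, hq_span x' hx', zero_add,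
            add_sub_cancel_right]
          exact Algebra.subset_adjoin (Set.mem_iUnion.2 ⟨2 * (n : ℤ), hw⟩)
        · rw [hπapp m v hvm, hq_Vm m hm v hvm, sub_zero]
          have hvW : v ∈ W m := by
            simp only [hWdef, if_neg hm]
            exact hvm
          exact Algebra.subset_adjoin (Set.mem_iUnion.2 ⟨m, hvW⟩)
      · intro r
        rw [π.commutes r]
        exact Subalgebra.algebraMap_mem _ r
      · intro a b _ _ ha hb
        rw [map_add]; exact add_mem ha hb
      · intro a b _ _ ha hb
        rw [map_mul]; exact mul_mem ha hb
    -- the key intertwining identity ψ ∘ π = E ∘ ψ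
    have hEψ : ∀ x : A, ψ (π x) = E (ψ x) := by
      intro x
      have hx : x ∈ Algebra.adjoin ℚ (⋃ n : ℤ, (V n : Set A)) := by rw [hS.gen]; trivial
      refine Algebra.adjoin_induction (hx := hx) ?_ ?_ ?_ ?_
      · intro v hv
        obtain ⟨m, hvm⟩ := Set.mem_iUnion.1 hv
        have hψqv : ψ (q v) = q v := by
          rw [hq_apply, map_smul, hψy]
        have hlhs : ψ (π v) = E v := by
          rw [hπapp m v hvm, map_sub, hψqv, hψapp m v hvm, add_sub_cancel_right]
        have hrhs : E (ψ v) = E v := by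
          rw [hψapp m v hvm, map_add, hq_apply, map_smul, hEdef,
            aux_E_y hS hθd hθy hy𝒜 hn, smul_zero, add_zero,
            aux_E_fix hS (aux_E_mem hS hθd hy𝒜 (hS.V_le m hvm))
              (aux_E_theta hS hθd hθy hn (hS.V_le m hvm))]
        rw [hlhs, hrhs]
      · intro r
        rw [π.commutes r, ψ.commutes r]
        have h1 : (algebraMap ℚ A) r = r • (1 : A) := Algebra.algebraMap_eq_smul_one r
        rw [h1, map_smul, hEdef, aux_E_one hS hθd]
      · intro a b _ _ ha hb
        calc ψ (π (a + b)) = ψ (π a) + ψ (π b) := by rw [map_add, map_add]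
          _ = E (ψ a) + E (ψ b) := by rw [ha, hb]
          _ = E (ψ a + ψ b) := (map_add E _ _).symm
          _ = E (ψ (a + b)) := by rw [map_add ψ a b]
      · intro a b _ _ ha hb
        calc ψ (π (a * b)) = ψ (π a) * ψ (π b) := by rw [map_mul, map_mul]
          _ = E (ψ a) * E (ψ b) := by rw [ha, hb]
          _ = E (ψ a * ψ b) := by
              rw [hEdef]
              exact (aux_E_mul_global hS hθd hθy hy𝒜 hn _ _).symm
          _ = E (ψ (a * b)) := by rw [map_mul ψ a b]
    -- final assembly
    refine ⟨φ, ?_, hψy, W, hgc, ?_, ?_⟩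
    · intro i a ha
      exact hψgr i a ha
    · show φ.symm ((d (φ y))) = d y
      have h1 : φ y = y := hψy
      rw [h1, AlgEquiv.symm_apply_eq]
      exact (hlow (d y) hdy_adj).symm
    · intro m v hv
      show φ.symm ((d (φ v))) ∈ gradedAdjoin W
      have hψv𝒜 : ψ v ∈ 𝒜 m := hψgr m v (hS.V_le m hv)
      have hc𝒜 : d (ψ v) ∈ 𝒜 (m + 1) := by
        have := hS.d_der.maps_mem m _ hψv𝒜
        rwa [show m - (-1) = m + 1 by ring] at this
      have hθψv : θ (ψ v) = lam v • 1 := by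
        rw [hψapp m v hv, map_add, hEdef, aux_E_theta hS hθd hθy hn (hS.V_le m hv),
          zero_add, hq_apply, map_smul, hθy]
      have hθc : θ (d (ψ v)) = 0 := by
        rw [← aux_dtheta hθ, hθψv, map_smul, aux_d_one hS, smul_zero]
      have hEc : E (d (ψ v)) = d (ψ v) := aux_E_fix hS hc𝒜 hθc
      set z := φ.symm (d (ψ v)) with hzdef
      have hψz : ψ z = d (ψ v) := φ.apply_symm_apply (d (ψ v))
      have hπz : π z = z := by
        apply hinj
        rw [hEψ z, hψz, hEc]
      show z ∈ gradedAdjoin W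
      rw [← hπz]
      exact hπ_adj z
end

section
/- Let (∧V, d) be a simply connected Sullivan minimal model with a Gottlieb element x ∈ V^{2n+1} of odd degree, witnessed by a derivation cycle θ of degree 2n+1 with θ(x) = 1. Fix a graded complement W of ⟨x⟩ in V, let φ be the algebra automorphism of ∧V with φ(x) = x and φ(v) = v − xθ(v) for v ∈ W, and set d' = φ⁻¹∘d∘φ and θ' = φ⁻¹∘θ∘φ, so φ : (∧V, d') → (∧V, d) is a DG algebra isomorphism and θ' is a derivation cycle of (∧V, d'). Then: (a) θ'(x) = 1 and d'(x) = dx; (b) there is a derivation λ of ∧W of degree 4n+2 such that θ'(χ) = x·λ(χ) for all χ ∈ ∧W; (c) there is a derivation d'₀ of ∧W of degree −1 such that d'(χ) = −x·λ(χ)·dx + d'₀(χ) for all χ ∈ ∧W, with λ as in (b). -/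
variable {A : Type} [Ring A] [Algebra ℚ A]

/-- (Theorem `odd`.) The structure of the Sullivan minimal model
after the change of basis induced by an odd-degree Gottlieb element `x ∈ V^{2n+1}`. -/
theorem statement4 (A : Type) [Ring A] [Algebra ℚ A]
    (𝒜 V : ℤ → Submodule ℚ A) (d : A →ₗ[ℚ] A)
    (hS : SullivanData 𝒜 V d)
    (n : ℕ) (x : A) (hx : x ∈ V (2 * (n : ℤ) + 1))
    (θ : A →ₗ[ℚ] A) (hθ : IsDerCycle 𝒜 d (2 * (n : ℤ) + 1) θ) (hθx : θ x = 1)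
    (W : ℤ → Submodule ℚ A) (hW : IsGradedComplement V x (2 * (n : ℤ) + 1) W)
    (φ : A ≃ₐ[ℚ] A) (hφx : φ x = x)
    (hφW : ∀ m : ℤ, ∀ v ∈ W m, φ v = v - x * θ v)
    (d' θ' : A →ₗ[ℚ] A)
    (hd' : d' = φ.symm.toLinearMap ∘ₗ d ∘ₗ φ.toLinearMap)
    (hθ' : θ' = φ.symm.toLinearMap ∘ₗ θ ∘ₗ φ.toLinearMap) :
    (θ' x = 1 ∧ d' x = d x) ∧
    ∃ lam : A →ₗ[ℚ] A, IsDegDerOn 𝒜 (gradedAdjoin W) (4 * (n : ℤ) + 2) lam ∧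
      (∀ χ ∈ gradedAdjoin W, θ' χ = x * lam χ) ∧
      ∃ d₀ : A →ₗ[ℚ] A, IsDegDerOn 𝒜 (gradedAdjoin W) (-1) d₀ ∧
        ∀ χ ∈ gradedAdjoin W, d' χ = -(x * lam χ * d x) + d₀ χ := by
  classical
  by_cases htr : Subsingleton A
  · refine ⟨⟨Subsingleton.elim _ _, Subsingleton.elim _ _⟩, 0, ⟨?_, ?_, ?_⟩, ?_,
      0, ⟨?_, ?_, ?_⟩, ?_⟩ <;>
    · intros
      first
        | exact Subsingleton.elim _ _
        | simpa using zero_mem _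
  haveI : Nontrivial A := not_subsingleton_iff_nontrivial.mp htr
  set t : ℤ := 2 * (n : ℤ) + 1 with ht
  have hot : Odd t := ⟨(n : ℤ), ht⟩
  have hxt : x ∈ 𝒜 t := hS.V_le _ hx
  have hTop : ∀ a : A, a ∈ ⨆ j, 𝒜 j := by
    intro a; rw [hS.internal.submodule_iSup_eq_top]; trivial
  -- homogeneous component lemma
  have hHC : ∀ (N : ℤ → Submodule ℚ A), (∀ j, N j ≤ 𝒜 j) →
      ∀ (i : ℤ) (a : A), a ∈ 𝒜 i → a ∈ (⨆ j, N j) → a ∈ N i := by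
    intro N hN i a hai hsup
    have hle : (⨆ j, N j) ≤ N i ⊔ (⨆ j, ⨆ _ : j ≠ i, 𝒜 j) := by
      refine iSup_le fun j => ?_
      rcases eq_or_ne j i with rfl | hji
      · exact le_sup_left
      · exact le_sup_of_le_right ((hN j).trans (le_iSup₂ (f := fun j (_ : j ≠ i) => 𝒜 j) j hji))
    rcases Submodule.mem_sup.mp (hle hsup) with ⟨u, hu, s, hs, rfl⟩
    have hs0 : s = 0 := by
      have hdis := hS.internal.submodule_iSupIndep i
      have hsA : s ∈ 𝒜 i := by
        have : (u + s) - u ∈ 𝒜 i := sub_mem hai (hN i hu)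
        simpa using this
      exact Submodule.disjoint_def.mp hdis s hsA hs
    simpa [hs0] using hu
  -- two linear maps agreeing on homogeneous elements agree
  have hext : ∀ (f g : A →ₗ[ℚ] A), (∀ j : ℤ, ∀ b ∈ 𝒜 j, f b = g b) → ∀ a, f a = g a := by
    intro f g h a
    refine Submodule.iSup_induction (motive := fun a => f a = g a) (fun i : ℤ => 𝒜 i) (hTop a)
      h (by simp) ?_
    intro u v hu hv; rw [map_add, map_add, hu, hv]
  have hsq : ∀ k : ℤ, ((-1 : ℚ) ^ k) * ((-1 : ℚ) ^ k) = 1 := by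
    intro k
    rcases Int.even_or_odd k with h | h
    · rw [h.neg_one_zpow]; norm_num
    · rw [h.neg_one_zpow]; norm_num
  have x2 : x * x = 0 := by
    have h := hS.gcomm t t x hxt x hxt
    rw [(hot.mul hot).neg_one_zpow, neg_one_smul] at h
    have h2 : (2 : ℚ) • (x * x) = 0 := by rw [two_smul]; nth_rewrite 2 [h]; abel
    have := smul_eq_zero.mp h2
    simpa using this
  have hθ1 : θ (1 : A) = 0 := by
    have h := hθ.1.leibniz 0 0 1 hS.one_mem 1 hS.one_mem
    simp at h
    exact h
  have hd1 : d (1 : A) = 0 := by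
    have h := hS.d_der.leibniz 0 0 1 hS.one_mem 1 hS.one_mem
    simp at h
    exact h
  have hθxb : ∀ b : A, θ (x * b) = b - x * θ b := by
    have h := hext (θ ∘ₗ LinearMap.mulLeft ℚ x)
      (LinearMap.id - LinearMap.mulLeft ℚ x ∘ₗ θ) ?_
    · intro b; simpa using h b
    · intro j b hb
      simp only [LinearMap.comp_apply, LinearMap.mulLeft_apply, LinearMap.sub_apply,
        LinearMap.id_apply]
      rw [hθ.1.leibniz t j x hxt b hb, hθx, (hot.mul hot).neg_one_zpow, neg_one_smul,
        one_mul, sub_eq_add_neg]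
  set xA : Submodule ℚ A := LinearMap.range (LinearMap.mulLeft ℚ x) with hxA
  have memxA : ∀ c : A, x * c ∈ xA := fun c => ⟨c, rfl⟩
  have x_xA : ∀ c : A, x * (x * c) = 0 := by
    intro c; rw [← mul_assoc, x2, zero_mul]
  have mul_xA : ∀ a c : A, a * (x * c) ∈ xA := by
    intro a
    refine Submodule.iSup_induction (motive := fun a => ∀ c, a * (x * c) ∈ xA)
      (fun i : ℤ => 𝒜 i) (hTop a) ?_ (by simp [zero_mem]) ?_
    · intro i a ha c
      have h1 : a * (x * c) = ((-1 : ℚ) ^ (i * t)) • (x * (a * c)) := by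
        rw [← mul_assoc, hS.gcomm i t a ha x hxt, smul_mul_assoc, mul_assoc]
      rw [h1]
      exact Submodule.smul_mem _ _ (memxA _)
    · intro u v hu hv c
      rw [add_mul]
      exact add_mem (hu c) (hv c)
  have hdecompV : ∀ v ∈ V t, ∃ w ∈ W t, ∃ c : ℚ, v = w + c • x := by
    intro v hv
    rw [← hW.2.2.1] at hv
    rcases Submodule.mem_sup.mp hv with ⟨w, hw, k, hk, rfl⟩
    rcases Submodule.mem_span_singleton.mp hk with ⟨c, rfl⟩
    exact ⟨w, hw, c, rfl⟩
  have hgen : ∀ a : A, a ∈ Algebra.adjoin ℚ (⋃ k : ℤ, (V k : Set A)) := by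
    intro a; rw [hS.gen]; trivial
  -- Lemma I : φ a - a ∈ xA
  have LemI : ∀ a : A, φ a - a ∈ xA := by
    intro a
    refine Algebra.adjoin_induction (hx := hgen a) ?_ ?_ ?_ ?_
    · intro v hv
      rcases Set.mem_iUnion.mp hv with ⟨m, hm⟩
      by_cases hmt : m = t
      · subst hmt
        obtain ⟨w, hw, c, rfl⟩ := hdecompV v hm
        have : φ (w + c • x) - (w + c • x) = -(x * θ w) := by
          rw [map_add, map_smul, hφx, hφW _ w hw]; abel
        rw [this]
        exact neg_mem (memxA _)
      · have hwm : v ∈ W m := by rw [hW.2.1 m hmt]; exact hm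
        have : φ v - v = -(x * θ v) := by rw [hφW _ v hwm]; abel
        rw [this]
        exact neg_mem (memxA _)
    · intro r
      simp [AlgEquiv.commutes]
    · intro a b _ _ ha hb
      have : φ (a + b) - (a + b) = (φ a - a) + (φ b - b) := by rw [map_add]; abel
      rw [this]; exact add_mem ha hb
    · intro a b _ _ ha hb
      have h1 : φ (a * b) - a * b = φ a * (φ b - b) + (φ a - a) * b := by
        rw [map_mul]; noncomm_ring
      rw [h1]
      refine add_mem ?_ ?_
      · rcases hb with ⟨c, hc⟩
        simp only [LinearMap.mulLeft_apply] at hc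
        rw [← hc]; exact mul_xA _ _
      · rcases ha with ⟨c, hc⟩
        simp only [LinearMap.mulLeft_apply] at hc
        rw [← hc, mul_assoc]; exact memxA _
  have hxφ : ∀ a : A, x * φ a = x * a := by
    intro a
    rcases LemI a with ⟨c, hc⟩
    simp only [LinearMap.mulLeft_apply] at hc
    have h0 : x * (φ a - a) = 0 := by rw [← hc]; exact x_xA c
    rw [mul_sub, sub_eq_zero] at h0
    exact h0
  have hφxmul : ∀ c : A, φ (x * c) = x * φ c := by
    intro c; rw [map_mul, hφx]
  have hφsx : φ.symm x = x := by
    apply φ.injective; rw [AlgEquiv.apply_symm_apply, hφx]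
  have hφsmul : ∀ c : A, φ.symm (x * c) = x * φ.symm c := by
    intro c; rw [map_mul, hφsx]
  have hxφs : ∀ a : A, x * φ.symm a = x * a := by
    intro a
    have := hxφ (φ.symm a)
    rw [AlgEquiv.apply_symm_apply] at this
    rw [this]
  have hxne : x ≠ 0 := by
    intro h
    apply one_ne_zero (α := A)
    rw [← hθx, h, map_zero]
  -- construct the linear functional ℓ with ℓ x = 1 vanishing on all W m
  set W' : Submodule ℚ A := ⨆ m, W m with hW'
  have hWA : ∀ m : ℤ, W m ≤ 𝒜 m := fun m => (hW.1 m).trans (hS.V_le m)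
  have hxW' : x ∉ W' := by
    intro hmem
    have hxWt : x ∈ W t := hHC W hWA t x hxt hmem
    have : x ∈ W t ⊓ Submodule.span ℚ {x} :=
      ⟨hxWt, Submodule.mem_span_singleton_self x⟩
    rw [hW.2.2.2] at this
    exact hxne this
  have hv : (Submodule.Quotient.mk x : A ⧸ W') ≠ 0 := by
    rw [Ne, Submodule.Quotient.mk_eq_zero]
    exact hxW'
  obtain ⟨C, hC⟩ := Submodule.exists_isCompl
    (Submodule.span ℚ {(Submodule.Quotient.mk x : A ⧸ W')})
  set e := LinearEquiv.toSpanNonzeroSingleton ℚ (A ⧸ W') (Submodule.Quotient.mk x) hv with he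
  set ℓ : A →ₗ[ℚ] ℚ :=
    (e.symm.toLinearMap ∘ₗ (Submodule.linearProjOfIsCompl _ C hC)) ∘ₗ W'.mkQ with hℓ
  have hℓx : ℓ x = 1 := by
    have h1 : (Submodule.linearProjOfIsCompl _ C hC) (Submodule.Quotient.mk x) =
        ⟨Submodule.Quotient.mk x, Submodule.mem_span_singleton_self _⟩ :=
      Submodule.linearProjOfIsCompl_apply_left hC
        ⟨Submodule.Quotient.mk x, Submodule.mem_span_singleton_self _⟩
    have h2 : e 1 = ⟨Submodule.Quotient.mk x, Submodule.mem_span_singleton_self _⟩ :=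
      LinearEquiv.toSpanNonzeroSingleton_one ℚ (A ⧸ W') (Submodule.Quotient.mk x) hv
    simp only [hℓ, LinearMap.comp_apply, Submodule.mkQ_apply, h1, LinearEquiv.coe_coe]
    rw [← h2, LinearEquiv.symm_apply_apply]
  have hℓW : ∀ m : ℤ, ∀ w ∈ W m, ℓ w = 0 := by
    intro m w hw
    have : (Submodule.Quotient.mk w : A ⧸ W') = 0 := by
      rw [Submodule.Quotient.mk_eq_zero]
      exact Submodule.mem_iSup_of_mem m hw
    simp only [hℓ, LinearMap.comp_apply, Submodule.mkQ_apply, this, map_zero]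
  set f : A →ₗ[ℚ] A := LinearMap.id - ℓ.smulRight x with hf
  have hfapp : ∀ a : A, f a = a - ℓ a • x := by
    intro a; simp [hf]
  have hfmem : ∀ m : ℤ, ∀ v ∈ V m, f v ∈ 𝒜 m := by
    intro m v hv
    by_cases hmt : m = t
    · subst hmt
      obtain ⟨w, hw, c, rfl⟩ := hdecompV v hv
      have : f (w + c • x) = w := by
        rw [hfapp, map_add, map_smul, hℓW t w hw, hℓx]
        simp
      rw [this]
      exact hWA t hw
    · have hwm : v ∈ W m := by rw [hW.2.1 m hmt]; exact hv
      have : f v = v := by rw [hfapp, hℓW m v hwm]; simp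
      rw [this]
      exact hS.V_le m hv
  obtain ⟨p, hp, -⟩ := hS.free ⟨A, 𝒜⟩ hS.gcomm f hfmem
  have hpx : p x = 0 := by
    rw [hp t x hx, hfapp, hℓx]
    simp
  have hpw : ∀ m : ℤ, ∀ w ∈ W m, p w = w := by
    intro m w hw
    rw [hp m w (hW.1 m hw), hfapp, hℓW m w hw]
    simp
  have hpfix : ∀ χ ∈ gradedAdjoin W, p χ = χ := by
    intro χ hχ
    refine Algebra.adjoin_induction (hx := hχ) ?_ ?_ ?_ ?_
    · intro w hw
      rcases Set.mem_iUnion.mp hw with ⟨m, hm⟩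
      exact hpw m w hm
    · intro r; exact p.commutes r
    · intro a b _ _ ha hb; rw [map_add, ha, hb]
    · intro a b _ _ ha hb; rw [map_mul, ha, hb]
  have hprange : ∀ a : A, p a ∈ gradedAdjoin W := by
    intro a
    refine Algebra.adjoin_induction (hx := hgen a) ?_ ?_ ?_ ?_
    · intro v hv
      rcases Set.mem_iUnion.mp hv with ⟨m, hm⟩
      by_cases hmt : m = t
      · subst hmt
        obtain ⟨w, hw, c, rfl⟩ := hdecompV v hm
        have : p (w + c • x) = w := by
          rw [map_add, map_smul, hpx, hpw t w hw]; simp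
        rw [this]
        exact Algebra.subset_adjoin (Set.mem_iUnion.mpr ⟨t, hw⟩)
      · have hwm : v ∈ W m := by rw [hW.2.1 m hmt]; exact hm
        rw [hpw m v hwm]
        exact Algebra.subset_adjoin (Set.mem_iUnion.mpr ⟨m, hwm⟩)
    · intro r; rw [p.commutes r]; exact algebraMap_mem _ r
    · intro a b _ _ ha hb; rw [map_add]; exact add_mem ha hb
    · intro a b _ _ ha hb; rw [map_mul]; exact mul_mem ha hb
  have hpxc : ∀ c : A, p (x * c) = 0 := by
    intro c; rw [map_mul, hpx, zero_mul]
  have hIp : ∀ a : A, a - p a ∈ xA := by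
    intro a
    refine Algebra.adjoin_induction (hx := hgen a) ?_ ?_ ?_ ?_
    · intro v hv
      rcases Set.mem_iUnion.mp hv with ⟨m, hm⟩
      by_cases hmt : m = t
      · subst hmt
        obtain ⟨w, hw, c, rfl⟩ := hdecompV v hm
        have h1 : p (w + c • x) = w := by
          rw [map_add, map_smul, hpx, hpw t w hw]; simp
        have h2 : (w + c • x) - p (w + c • x) = c • (x * 1) := by
          rw [h1, mul_one]; abel
        rw [h2]
        exact Submodule.smul_mem _ _ (memxA 1)
      · have hwm : v ∈ W m := by rw [hW.2.1 m hmt]; exact hm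
        rw [hpw m v hwm, sub_self]
        exact zero_mem _
    · intro r; rw [p.commutes r, sub_self]; exact zero_mem _
    · intro a b _ _ ha hb
      have : (a + b) - p (a + b) = (a - p a) + (b - p b) := by rw [map_add]; abel
      rw [this]; exact add_mem ha hb
    · intro a b _ _ ha hb
      have h1 : a * b - p (a * b) = a * (b - p b) + (a - p a) * p b := by
        rw [map_mul]; noncomm_ring
      rw [h1]
      refine add_mem ?_ ?_
      · rcases hb with ⟨c, hc⟩
        simp only [LinearMap.mulLeft_apply] at hc
        rw [← hc]; exact mul_xA _ _
      · rcases ha with ⟨c, hc⟩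
        simp only [LinearMap.mulLeft_apply] at hc
        rw [← hc, mul_assoc]; exact memxA _
  have hxpa : ∀ a : A, x * p a = x * a := by
    intro a
    rcases hIp a with ⟨c, hc⟩
    simp only [LinearMap.mulLeft_apply] at hc
    have h0 : x * (a - p a) = 0 := by rw [← hc]; exact x_xA c
    rw [mul_sub, sub_eq_zero] at h0
    exact h0.symm
  -- every element lies in the span of monomials in the generators
  have hMono : ∀ a : A, a ∈ Submodule.span ℚ
      ((Submonoid.closure (⋃ k : ℤ, (V k : Set A)) : Submonoid A) : Set A) := by
    intro a
    have h2 : a ∈ Subalgebra.toSubmodule (Algebra.adjoin ℚ (⋃ k : ℤ, (V k : Set A))) := hgen a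
    rw [Algebra.adjoin_eq_span] at h2
    exact h2
  -- grade preservation for algebra endomorphisms preserving degrees of generators
  have hGP : ∀ (ψ : A →ₐ[ℚ] A), (∀ m : ℤ, ∀ v ∈ V m, ψ v ∈ 𝒜 m) →
      ∀ i : ℤ, ∀ a ∈ 𝒜 i, ψ a ∈ 𝒜 i := by
    intro ψ hψ i a hai
    set N : ℤ → Submodule ℚ A := fun j => 𝒜 j ⊓ Submodule.comap ψ.toLinearMap (𝒜 j) with hN
    have hsup : a ∈ ⨆ j, N j := by
      refine Submodule.span_le.mpr ?_ (hMono a)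
      intro m hm
      have : ∃ j, m ∈ N j := by
        refine Submonoid.closure_induction (motive := fun m _ => ∃ j, m ∈ N j) ?_ ?_ ?_ hm
        · intro v hv
          rcases Set.mem_iUnion.mp hv with ⟨k, hk⟩
          exact ⟨k, ⟨hS.V_le k hk, hψ k v hk⟩⟩
        · refine ⟨0, ⟨hS.one_mem, ?_⟩⟩
          show (1 : A) ∈ Submodule.comap ψ.toLinearMap (𝒜 0)
          rw [Submodule.mem_comap, AlgHom.toLinearMap_apply, map_one]
          exact hS.one_mem
        · rintro a b _ _ ⟨i1, hi1, hi1'⟩ ⟨j1, hj1, hj1'⟩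
          refine ⟨i1 + j1, ⟨hS.mul_mem _ _ _ hi1 _ hj1, ?_⟩⟩
          show _ ∈ Submodule.comap ψ.toLinearMap (𝒜 (i1 + j1))
          rw [Submodule.mem_comap, AlgHom.toLinearMap_apply, map_mul]
          exact hS.mul_mem _ _ _ (Submodule.mem_comap.mp hi1') _ (Submodule.mem_comap.mp hj1')
      rcases this with ⟨j, hj⟩
      exact Submodule.mem_iSup_of_mem j hj
    exact (hHC N (fun j => inf_le_left) i a hai hsup).2
  -- degree one part is trivial
  have h𝒜1 : ∀ a ∈ 𝒜 (1 : ℤ), a = 0 := by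
    intro a ha
    set N : ℤ → Submodule ℚ A := fun j => if j = 1 then ⊥ else 𝒜 j with hN
    have hNle : ∀ j, N j ≤ 𝒜 j := by
      intro j; by_cases h : j = 1 <;> simp [hN, h]
    have hsup : a ∈ ⨆ j, N j := by
      refine Submodule.span_le.mpr ?_ (hMono a)
      intro m hm
      have : ∃ j, m ∈ 𝒜 j ∧ (j = 0 ∨ 2 ≤ j) := by
        refine Submonoid.closure_induction (motive := fun m _ => ∃ j, m ∈ 𝒜 j ∧ (j = 0 ∨ 2 ≤ j))
          ?_ ?_ ?_ hm
        · intro v hv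
          rcases Set.mem_iUnion.mp hv with ⟨k, hk⟩
          rcases lt_or_ge k 2 with hk2 | hk2
          · have hv0 : v = 0 := by
              rcases lt_trichotomy k 0 with hk0 | hk0 | hk0
              · have : V k = ⊥ := le_bot_iff.mp ((hS.V_le k).trans (le_of_eq (hS.neg_bot k hk0)))
                rw [this] at hk; simpa using hk
              · rw [hk0, hS.V_zero] at hk; simpa using hk
              · have hk1 : k = 1 := by omega
                rw [hk1, hS.V_one] at hk; simpa using hk
            exact ⟨0, by rw [hv0]; exact zero_mem _, Or.inl rfl⟩
          · exact ⟨k, hS.V_le k hk, Or.inr hk2⟩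
        · exact ⟨0, hS.one_mem, Or.inl rfl⟩
        · rintro a b _ _ ⟨i1, hi1, hi1'⟩ ⟨j1, hj1, hj1'⟩
          exact ⟨i1 + j1, hS.mul_mem _ _ _ hi1 _ hj1, by omega⟩
      rcases this with ⟨j, hj, hj'⟩
      have hj1 : j ≠ 1 := by omega
      refine Submodule.mem_iSup_of_mem j ?_
      simp [hN, hj1, hj]
    have := hHC N hNle 1 a ha hsup
    simpa [hN] using this
  -- grade preservation instances
  have hφGP : ∀ i : ℤ, ∀ a ∈ 𝒜 i, φ a ∈ 𝒜 i := by
    refine hGP φ.toAlgHom ?_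
    intro m v hv
    by_cases hmt : m = t
    · subst hmt
      obtain ⟨w, hw, c, rfl⟩ := hdecompV v hv
      have h1 : φ (w + c • x) = w - x * θ w + c • x := by
        rw [map_add, map_smul, hφx, hφW _ w hw]
      show φ (w + c • x) ∈ 𝒜 t
      rw [h1]
      have hxθw : x * θ w ∈ 𝒜 (t + (t - t)) :=
        hS.mul_mem _ _ _ hxt _ (hθ.1.maps_mem t w (hWA t hw))
      have hidx : t + (t - t) = t := by ring
      rw [hidx] at hxθw
      exact add_mem (sub_mem (hWA t hw) hxθw) (Submodule.smul_mem _ _ hxt)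
    · have hwm : v ∈ W m := by rw [hW.2.1 m hmt]; exact hv
      show φ v ∈ 𝒜 m
      rw [hφW _ v hwm]
      have hxθv : x * θ v ∈ 𝒜 (t + (m - t)) :=
        hS.mul_mem _ _ _ hxt _ (hθ.1.maps_mem m v (hWA m hwm))
      have hidx : t + (m - t) = m := by ring
      rw [hidx] at hxθv
      exact sub_mem (hWA m hwm) hxθv
  have hφsGP : ∀ i : ℤ, ∀ a ∈ 𝒜 i, φ.symm a ∈ 𝒜 i := by
    refine hGP φ.symm.toAlgHom ?_
    intro m v hv
    by_cases hmt : m = t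
    · subst hmt
      obtain ⟨w, hw, c, rfl⟩ := hdecompV v hv
      have h1 : φ.symm (w + c • x) = w + x * θ w + c • x := by
        apply φ.injective
        rw [AlgEquiv.apply_symm_apply, map_add, map_add, map_smul, hφx, hφW _ w hw, hφxmul,
          hxφ (θ w)]
        abel
      show φ.symm (w + c • x) ∈ 𝒜 t
      rw [h1]
      have hxθw : x * θ w ∈ 𝒜 (t + (t - t)) :=
        hS.mul_mem _ _ _ hxt _ (hθ.1.maps_mem t w (hWA t hw))
      have hidx : t + (t - t) = t := by ring
      rw [hidx] at hxθw
      exact add_mem (add_mem (hWA t hw) hxθw) (Submodule.smul_mem _ _ hxt)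
    · have hwm : v ∈ W m := by rw [hW.2.1 m hmt]; exact hv
      have h1 : φ.symm v = v + x * θ v := by
        apply φ.injective
        rw [AlgEquiv.apply_symm_apply, map_add, hφW _ v hwm, hφxmul, hxφ (θ v)]
        abel
      show φ.symm v ∈ 𝒜 m
      rw [h1]
      have hxθv : x * θ v ∈ 𝒜 (t + (m - t)) :=
        hS.mul_mem _ _ _ hxt _ (hθ.1.maps_mem m v (hWA m hwm))
      have hidx : t + (m - t) = m := by ring
      rw [hidx] at hxθv
      exact add_mem (hS.V_le m hv) hxθv
  have hpGP : ∀ i : ℤ, ∀ a ∈ 𝒜 i, p a ∈ 𝒜 i := by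
    refine hGP p ?_
    intro m v hv
    rw [hp m v hv]
    exact hfmem m v hv
  -- the "coefficient of x" operator ξ
  set ξ : A →ₗ[ℚ] A := p.toLinearMap ∘ₗ (θ ∘ₗ (LinearMap.id - p.toLinearMap)) with hξdef
  have hξapp : ∀ a : A, ξ a = p (θ (a - p a)) := by
    intro a; simp [hξdef]
  have hξx : ∀ a : A, x * ξ a = a - p a := by
    intro a
    rcases hIp a with ⟨c, hc⟩
    simp only [LinearMap.mulLeft_apply] at hc
    rw [hξapp, ← hc, hθxb c, map_sub, hpxc, sub_zero, hxpa c]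
  have hξW : ∀ a : A, ξ a ∈ gradedAdjoin W := by
    intro a; rw [hξapp]; exact hprange _
  have hdeca : ∀ a : A, a = p a + x * ξ a := by
    intro a; rw [hξx]; abel
  have hξgrade : ∀ (m : ℤ) (a : A), a ∈ 𝒜 m → ξ a ∈ 𝒜 (m - t) := by
    intro m a ha
    rw [hξapp]
    exact hpGP _ _ (hθ.1.maps_mem m _ (sub_mem ha (hpGP m a ha)))
  -- injectivity of multiplication by x on ∧W
  have hinj : ∀ χ ∈ gradedAdjoin W, x * χ = 0 → χ = 0 := by
    intro χ hχ h0
    have h1 : θ (x * χ) = 0 := by rw [h0, map_zero]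
    rw [hθxb χ] at h1
    have h2 : χ = x * θ χ := by
      have := sub_eq_zero.mp h1
      exact this
    have h3 : p χ = 0 := by rw [h2, hpxc]
    rw [← hpfix χ hχ, h3]
  -- Lemma A : φ on ∧W
  have LemA : ∀ χ ∈ gradedAdjoin W, φ χ = χ - x * θ χ := by
    intro χ hχ
    have hχ' : χ ∈ Submodule.span ℚ
        ((Submonoid.closure (⋃ k : ℤ, (W k : Set A)) : Submonoid A) : Set A) := by
      have h2 : χ ∈ Subalgebra.toSubmodule (Algebra.adjoin ℚ (⋃ k : ℤ, (W k : Set A))) := hχ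
      rw [Algebra.adjoin_eq_span] at h2
      exact h2
    refine Submodule.span_induction ?_ ?_ ?_ ?_ hχ'
    · intro m hm
      have : (∃ i : ℤ, m ∈ 𝒜 i) ∧ φ m = m - x * θ m := by
        refine Submonoid.closure_induction
          (motive := fun m _ => (∃ i : ℤ, m ∈ 𝒜 i) ∧ φ m = m - x * θ m) ?_ ?_ ?_ hm
        · intro w hw
          rcases Set.mem_iUnion.mp hw with ⟨k, hk⟩
          exact ⟨⟨k, hWA k hk⟩, hφW k w hk⟩
        · refine ⟨⟨0, hS.one_mem⟩, ?_⟩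
          rw [map_one, hθ1, mul_zero, sub_zero]
        · rintro a b _ _ ⟨⟨i, hai⟩, ha⟩ ⟨⟨j, hbj⟩, hb⟩
          refine ⟨⟨i + j, hS.mul_mem _ _ _ hai _ hbj⟩, ?_⟩
          set s : ℚ := (-1) ^ (i * t) with hs
          set s2 : ℚ := (-1) ^ ((i - t) * t) with hs2
          have e1 : a * (x * θ b) = s • (x * (a * θ b)) := by
            rw [← mul_assoc, hS.gcomm i t a hai x hxt, smul_mul_assoc, mul_assoc]
          have e2 : (x * θ a) * (x * θ b) = 0 := by
            have h3 : θ a * x = s2 • (x * θ a) :=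
              hS.gcomm _ _ _ (hθ.1.maps_mem i a hai) x hxt
            calc (x * θ a) * (x * θ b) = x * (θ a * x * θ b) := by
                  rw [mul_assoc, ← mul_assoc (θ a) x (θ b)]
              _ = s2 • (x * (x * (θ a * θ b))) := by
                  rw [h3, smul_mul_assoc, mul_smul_comm, mul_assoc]
              _ = 0 := by rw [x_xA, smul_zero]
          have e3 : θ (a * b) = θ a * b + s • (a * θ b) :=
            hθ.1.leibniz i j a hai b hbj
          calc φ (a * b) = (a - x * θ a) * (b - x * θ b) := by rw [map_mul, ha, hb]
            _ = a * b - a * (x * θ b) - (x * θ a) * b + (x * θ a) * (x * θ b) := by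
                noncomm_ring
            _ = a * b - s • (x * (a * θ b)) - x * (θ a * b) + 0 := by
                rw [e1, e2, mul_assoc]
            _ = a * b - x * θ (a * b) := by
                rw [e3, mul_add, mul_smul_comm, add_zero]
                abel
      exact this.2
    · rw [map_zero, map_zero, mul_zero, sub_zero]
    · intro a b _ _ ha hb
      rw [map_add, ha, hb, map_add, mul_add]
      abel
    · intro c a _ ha
      rw [map_smul, ha, map_smul, smul_sub, mul_smul_comm]
  have hθ'app : ∀ a : A, θ' a = φ.symm (θ (φ a)) := by
    intro a; rw [hθ']; simp
  have hd'app : ∀ a : A, d' a = φ.symm (d (φ a)) := by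
    intro a; rw [hd']; simp
  have hθ'x : θ' x = 1 := by
    rw [hθ'app, hφx, hθx, map_one]
  have hanti : ∀ a : A, d (θ a) + θ (d a) = 0 := by
    intro a
    have h := DFunLike.congr_fun hθ.2 a
    simp only [Dcomm, LinearMap.sub_apply, LinearMap.comp_apply, LinearMap.smul_apply,
      LinearMap.zero_apply] at h
    rw [hot.neg_one_zpow, neg_one_smul, sub_neg_eq_add] at h
    exact h
  have hθdx : θ (d x) = 0 := by
    have h := hanti x
    rw [hθx, hd1, zero_add] at h
    exact h
  have hdx𝒜 : d x ∈ 𝒜 (t + 1) := by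
    have h := hS.d_der.maps_mem t x hxt
    have hidx : t - (-1) = t + 1 := by ring
    rwa [hidx] at h
  have hξdx : ξ (d x) = 0 := by
    refine h𝒜1 _ ?_
    have h := hξgrade (t + 1) (d x) hdx𝒜
    have hidx : t + 1 - t = 1 := by ring
    rwa [hidx] at h
  have hpdx : p (d x) = d x := by
    have h := hdeca (d x)
    rw [hξdx, mul_zero, add_zero] at h
    exact h.symm
  have hdxW : d x ∈ gradedAdjoin W := hpdx ▸ hprange (d x)
  have hφdx : φ (d x) = d x := by
    rw [LemA _ hdxW, hθdx, mul_zero, sub_zero]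
  have hd'x : d' x = d x := by
    rw [hd'app, hφx]
    apply φ.injective
    rw [AlgEquiv.apply_symm_apply, hφdx]
  have hθ'grade : ∀ i : ℤ, ∀ a ∈ 𝒜 i, θ' a ∈ 𝒜 (i - t) := by
    intro i a ha
    rw [hθ'app]
    exact hφsGP _ _ (hθ.1.maps_mem i _ (hφGP i a ha))
  have hd'grade : ∀ i : ℤ, ∀ a ∈ 𝒜 i, d' a ∈ 𝒜 (i + 1) := by
    intro i a ha
    rw [hd'app]
    have h := hS.d_der.maps_mem i _ (hφGP i a ha)
    have hidx : i - (-1) = i + 1 := by ring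
    rw [hidx] at h
    exact hφsGP _ _ h
  have hθ'leib : ∀ (i j : ℤ) (a b : A), a ∈ 𝒜 i → b ∈ 𝒜 j →
      θ' (a * b) = θ' a * b + ((-1 : ℚ) ^ (i * t)) • (a * θ' b) := by
    intro i j a b ha hb
    rw [hθ'app, hθ'app, hθ'app, map_mul,
      hθ.1.leibniz i j (φ a) (hφGP i a ha) (φ b) (hφGP j b hb),
      map_add, map_smul, map_mul, map_mul, AlgEquiv.symm_apply_apply,
      AlgEquiv.symm_apply_apply]
  have hd'leib : ∀ (i j : ℤ) (a b : A), a ∈ 𝒜 i → b ∈ 𝒜 j →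
      d' (a * b) = d' a * b + ((-1 : ℚ) ^ (i * (-1 : ℤ))) • (a * d' b) := by
    intro i j a b ha hb
    rw [hd'app, hd'app, hd'app, map_mul,
      hS.d_der.leibniz i j (φ a) (hφGP i a ha) (φ b) (hφGP j b hb),
      map_add, map_smul, map_mul, map_mul, AlgEquiv.symm_apply_apply,
      AlgEquiv.symm_apply_apply]
  have hθ'xb : ∀ b : A, θ' (x * b) = b - x * θ' b := by
    have h := hext (θ' ∘ₗ LinearMap.mulLeft ℚ x)
      (LinearMap.id - LinearMap.mulLeft ℚ x ∘ₗ θ') ?_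
    · intro b; simpa using h b
    · intro j b hb
      simp only [LinearMap.comp_apply, LinearMap.mulLeft_apply, LinearMap.sub_apply,
        LinearMap.id_apply]
      rw [hθ'leib t j x b hxt hb, hθ'x, (hot.mul hot).neg_one_zpow, neg_one_smul,
        one_mul, sub_eq_add_neg]
  have hd'xb : ∀ b : A, d' (x * b) = d x * b - x * d' b := by
    have h := hext (d' ∘ₗ LinearMap.mulLeft ℚ x)
      (LinearMap.mulLeft ℚ (d x) - LinearMap.mulLeft ℚ x ∘ₗ d') ?_
    · intro b; simpa using h b
    · intro j b hb
      simp only [LinearMap.comp_apply, LinearMap.mulLeft_apply, LinearMap.sub_apply]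
      have hodd : Odd (t * (-1 : ℤ)) := by
        have : t * (-1 : ℤ) = -t := by ring
        rw [this]; exact hot.neg
      rw [hd'leib t j x b hxt hb, hd'x, hodd.neg_one_zpow, neg_one_smul, sub_eq_add_neg]
  have hanti' : ∀ a : A, d' (θ' a) + θ' (d' a) = 0 := by
    intro a
    rw [hd'app, hθ'app, hθ'app, hd'app, AlgEquiv.apply_symm_apply, AlgEquiv.apply_symm_apply,
      ← map_add, hanti, map_zero]
  have hdxc : ∀ b : A, d x * b = b * d x := by
    have heven : Even (t + 1) := ⟨(n : ℤ) + 1, by rw [ht]; ring⟩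
    have h := hext (LinearMap.mulLeft ℚ (d x)) (LinearMap.mulRight ℚ (d x)) ?_
    · intro b; simpa using h b
    · intro j b hb
      simp only [LinearMap.mulLeft_apply, LinearMap.mulRight_apply]
      rw [hS.gcomm (t + 1) j (d x) hdx𝒜 b hb, (heven.mul_right j).neg_one_zpow, one_smul]
  set lam : A →ₗ[ℚ] A := ξ ∘ₗ θ' with hlam
  have hlamapp : ∀ a : A, lam a = ξ (θ' a) := by intro a; rfl
  have hθ'W : ∀ χ ∈ gradedAdjoin W, θ' χ = x * lam χ := by
    intro χ hχ
    have h1 : θ' χ = x * φ.symm (θ (θ χ)) := by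
      rw [hθ'app, LemA χ hχ, map_sub, hθxb (θ χ), sub_sub_cancel, hφsmul]
    have h2 : p (θ' χ) = 0 := by rw [h1, hpxc]
    have h3 := hdeca (θ' χ)
    rw [h2, zero_add] at h3
    rw [hlamapp]
    exact h3
  have hlamW : ∀ a : A, lam a ∈ gradedAdjoin W := by
    intro a; rw [hlamapp]; exact hξW _
  have hlamp : ∀ a : A, p (lam a) = lam a := fun a => hpfix _ (hlamW a)
  have hlamgrade : ∀ i : ℤ, ∀ a ∈ 𝒜 i, lam a ∈ 𝒜 (i - (4 * (n : ℤ) + 2)) := by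
    intro i a ha
    rw [hlamapp]
    have h := hξgrade (i - t) (θ' a) (hθ'grade i a ha)
    have hidx : i - t - t = i - (4 * (n : ℤ) + 2) := by rw [ht]; ring
    rwa [hidx] at h
  have hlamleib : ∀ (i j : ℤ) (a b : A), a ∈ gradedAdjoin W → b ∈ gradedAdjoin W →
      a ∈ 𝒜 i → b ∈ 𝒜 j → lam (a * b) = lam a * b + a * lam b := by
    intro i j a b haW hbW hai hbj
    have hmem : lam (a * b) - (lam a * b + a * lam b) ∈ gradedAdjoin W :=
      sub_mem (hlamW _) (add_mem (mul_mem (hlamW a) hbW) (mul_mem haW (hlamW b)))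
    have hx0 : x * (lam (a * b) - (lam a * b + a * lam b)) = 0 := by
      set s : ℚ := (-1) ^ (i * t) with hs
      have h1 : x * lam (a * b) = θ' (a * b) := (hθ'W _ (mul_mem haW hbW)).symm
      have h2 : θ' (a * b) = θ' a * b + s • (a * θ' b) := hθ'leib i j a b hai hbj
      have h3 : a * (x * lam b) = s • (x * (a * lam b)) := by
        rw [← mul_assoc, hS.gcomm i t a hai x hxt, smul_mul_assoc, mul_assoc]
      calc x * (lam (a * b) - (lam a * b + a * lam b))
          = x * lam (a * b) - (x * (lam a * b) + x * (a * lam b)) := by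
            rw [mul_sub, mul_add]
        _ = θ' a * b + s • (a * θ' b) - (x * (lam a * b) + x * (a * lam b)) := by
            rw [h1, h2]
        _ = x * (lam a * b) + s • (s • (x * (a * lam b))) -
              (x * (lam a * b) + x * (a * lam b)) := by
            rw [hθ'W a haW, mul_assoc, hθ'W b hbW, h3]
        _ = 0 := by rw [smul_smul, hsq, one_smul]; abel
    have h5 := hinj _ hmem hx0
    exact sub_eq_zero.mp h5
  refine ⟨⟨hθ'x, hd'x⟩, lam,
    ⟨fun a _ => hlamW a, fun i a _ hai => hlamgrade i a hai, ?_⟩,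
    hθ'W, p.toLinearMap ∘ₗ d', ⟨?_, ?_, ?_⟩, ?_⟩
  · -- Leibniz rule for lam with the (trivial) sign
    intro i j a haW b hbW hai hbj
    rw [hlamleib i j a b haW hbW hai hbj]
    have heven : Even (i * (4 * (n : ℤ) + 2)) := ⟨i * (2 * (n : ℤ) + 1), by ring⟩
    rw [heven.neg_one_zpow, one_smul]
  · -- d₀ maps ∧W to ∧W
    intro a _
    simp only [LinearMap.comp_apply, AlgHom.toLinearMap_apply]
    exact hprange (d' a)
  · -- d₀ grading
    intro i a _ hai
    simp only [LinearMap.comp_apply, AlgHom.toLinearMap_apply]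
    have hidx : i - (-1 : ℤ) = i + 1 := by ring
    rw [hidx]
    exact hpGP _ _ (hd'grade i a hai)
  · -- d₀ Leibniz
    intro i j a haW b hbW hai hbj
    simp only [LinearMap.comp_apply, AlgHom.toLinearMap_apply]
    rw [hd'leib i j a b hai hbj, map_add, map_mul, map_smul, map_mul,
      hpfix a haW, hpfix b hbW]
  · -- the formula for d'
    intro χ hχ
    have hk := hanti' χ
    have h1 : d' (θ' χ) = d x * lam χ - x * d' (lam χ) := by
      rw [hθ'W χ hχ, hd'xb]
    have h2 : θ' (d' χ) = x * lam (p (d' χ)) + (ξ (d' χ) - x * θ' (ξ (d' χ))) := by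
      conv_lhs => rw [hdeca (d' χ)]
      rw [map_add, hθ'W _ (hprange (d' χ)), hθ'xb]
    have h3 : p (d x * lam χ) = d x * lam χ := by
      rw [map_mul, hpdx, hlamp]
    have h5 : p (d' (θ' χ) + θ' (d' χ)) = 0 := by rw [hk, map_zero]
    rw [h1, h2, map_add, map_sub, map_add, map_sub, h3, hpxc, hpxc, hpxc,
      hpfix _ (hξW _)] at h5
    have h5' : d x * lam χ + ξ (d' χ) = 0 := by
      rw [← h5]; abel
    have h4 : ξ (d' χ) = -(d x * lam χ) := eq_neg_of_add_eq_zero_left ?hyp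
    case hyp => rw [← h5']; abel
    have h6 : d' χ = p (d' χ) + x * ξ (d' χ) := hdeca (d' χ)
    rw [h4] at h6
    have h7 : x * -(d x * lam χ) = -(x * lam χ * d x) := by
      rw [mul_neg, hdxc (lam χ), ← mul_assoc]
    simp only [LinearMap.comp_apply, AlgHom.toLinearMap_apply]
    exact h6.trans (by rw [h7, add_comm])
end

section
/- Let (∧V, d) be a simply connected Sullivan minimal model and let θ_a be a derivation cycle of degree 2n−1 such that [θ_a, θ_a](y₀) = 1 for some y₀ ∈ V^{4n−2}. Then there exists an element x ∈ V^{2n−1} with θ_a(x) = 1. -/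
variable {A : Type} [Ring A] [Algebra ℚ A]

/-- (Lemma `Gottliebx`.) If `[θa, θa](y₀) = 1` for some
`y₀ ∈ V^{4n−2}`, then there is `x ∈ V^{2n−1}` with `θa(x) = 1`. -/
theorem statement8 (A : Type) [Ring A] [Algebra ℚ A]
    (𝒜 V : ℤ → Submodule ℚ A) (d : A →ₗ[ℚ] A)
    (hS : SullivanData 𝒜 V d)
    (n : ℕ) (θa : A →ₗ[ℚ] A) (hθa : IsDerCycle 𝒜 d (2 * (n : ℤ) - 1) θa)
    (y₀ : A) (hy₀ : y₀ ∈ V (4 * (n : ℤ) - 2))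
    (hval : gBracket θa θa (2 * (n : ℤ) - 1) (2 * (n : ℤ) - 1) y₀ = 1) :
    ∃ x ∈ V (2 * (n : ℤ) - 1), θa x = 1 := by
  obtain ⟨hder, -⟩ := hθa
  set t : ℤ := 2 * (n : ℤ) - 1 with ht
  -- θa y₀ lies in degree t
  have hz : θa y₀ ∈ 𝒜 t := by
    have h := hder.maps_mem _ y₀ (hS.V_le _ hy₀)
    have he : (4 * (n : ℤ) - 2) - t = t := by omega
    rwa [he] at h
  -- (-1)^(t*t) = -1
  have hpow : ((-1 : ℚ) ^ (t * t)) = -1 := by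
    have hm : t * t = 2 * (2 * (n : ℤ) * n - 2 * n) + 1 := by ring
    rw [hm, zpow_add₀ (by norm_num : (-1 : ℚ) ≠ 0), zpow_mul, zpow_one]
    norm_num
  -- hval gives θa (θa y₀) + θa (θa y₀) = 1
  have hval2 : θa (θa y₀) + θa (θa y₀) = 1 := by
    have h1 : gBracket θa θa t t y₀
        = θa (θa y₀) - ((-1 : ℚ) ^ (t * t)) • θa (θa y₀) := by
      simp [gBracket, LinearMap.sub_apply, LinearMap.smul_apply, LinearMap.comp_apply]
    rw [h1, hpow] at hval
    rw [neg_smul, one_smul, sub_neg_eq_add] at hval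
    exact hval
  -- The key decomposition
  set G : Set A := ⋃ k : ℤ, (V k : Set A) with hG
  set K : Submodule ℚ A := 𝒜 t ⊓ LinearMap.ker θa with hK
  set U : Submodule ℚ A := (⨆ i, ⨆ _ : i ≠ t, 𝒜 i) ⊔ (V t ⊔ K) with hU
  have hP : ∀ m ∈ Submonoid.closure G,
      m = 1 ∨ ∃ k : ℤ, 2 ≤ k ∧ m ∈ 𝒜 k ∧ (k = t → m ∈ V t ∨ θa m = 0) := by
    intro m hm
    induction hm using Submonoid.closure_induction with
    | mem x hx =>
      right
      obtain ⟨_, ⟨j, rfl⟩, hxj⟩ := hx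
      by_cases hj : 2 ≤ j
      · refine ⟨j, hj, hS.V_le _ hxj, ?_⟩
        rintro rfl
        exact Or.inl hxj
      · have hx0 : x = 0 := by
          rcases lt_trichotomy j 0 with hneg | h0 | hpos
          · have : x ∈ (⊥ : Submodule ℚ A) := (hS.neg_bot j hneg) ▸ (hS.V_le j hxj)
            simpa using this
          · subst h0
            have hxj' : x ∈ V 0 := hxj
            rw [hS.V_zero] at hxj'; simpa using hxj'
          · have h1 : j = 1 := by omega
            subst h1
            have hxj' : x ∈ V 1 := hxj
            rw [hS.V_one] at hxj'; simpa using hxj'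
        subst hx0
        exact ⟨2, le_refl 2, zero_mem _, fun _ => Or.inl (zero_mem _)⟩
    | one => exact Or.inl rfl
    | mul x y hx hy ihx ihy =>
      rcases ihx with rfl | ⟨k, hk2, hkA, hkt⟩
      · simpa using ihy
      rcases ihy with rfl | ⟨k', hk'2, hk'A, hk't⟩
      · right; exact ⟨k, hk2, by simpa using hkA, by simpa using hkt⟩
      right
      refine ⟨k + k', by omega, hS.mul_mem _ _ _ hkA _ hk'A, ?_⟩
      intro hkk
      right
      have h1 : θa x = 0 := by
        have := hder.maps_mem _ x hkA
        rw [hS.neg_bot (k - t) (by omega)] at this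
        simpa using this
      have h2 : θa y = 0 := by
        have := hder.maps_mem _ y hk'A
        rw [hS.neg_bot (k' - t) (by omega)] at this
        simpa using this
      rw [hder.leibniz _ _ _ hkA _ hk'A, h1, h2]
      simp
  have hspan : Submodule.span ℚ ((Submonoid.closure G : Submonoid A) : Set A)
      = (⊤ : Submodule ℚ A) := by
    rw [← Algebra.adjoin_eq_span, hS.gen]
    rfl
  have hUtop : (⊤ : Submodule ℚ A) ≤ U := by
    rw [← hspan]
    refine Submodule.span_le.mpr ?_
    intro m hm
    rcases hP m hm with rfl | ⟨k, hk2, hkA, hkt⟩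
    · refine Submodule.mem_sup_left ?_
      refine Submodule.mem_iSup_of_mem 0 ?_
      refine Submodule.mem_iSup_of_mem (by omega) hS.one_mem
    · by_cases hkt' : k = t
      · subst hkt'
        rcases hkt rfl with h | h
        · exact Submodule.mem_sup_right (Submodule.mem_sup_left h)
        · exact Submodule.mem_sup_right (Submodule.mem_sup_right ⟨hkA, h⟩)
      · refine Submodule.mem_sup_left ?_
        refine Submodule.mem_iSup_of_mem k ?_
        exact Submodule.mem_iSup_of_mem hkt' hkA
  -- project θa y₀ onto V t ⊔ K
  have hzU : θa y₀ ∈ U := hUtop trivial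
  rw [hU, Submodule.mem_sup] at hzU
  obtain ⟨u, hu, w, hw, huw⟩ := hzU
  have hVK : V t ⊔ K ≤ 𝒜 t := sup_le (hS.V_le t) inf_le_left
  have hwA : w ∈ 𝒜 t := hVK hw
  have hu0 : u = 0 := by
    have huA : u ∈ 𝒜 t := by
      have : u = θa y₀ - w := by rw [← huw]; abel
      rw [this]; exact sub_mem hz hwA
    have hdisj := (hS.internal.submodule_iSupIndep) t
    have := hdisj.le_bot (Submodule.mem_inf.mpr ⟨huA, hu⟩)
    simpa using this
  have hzw : θa y₀ = w := by rw [← huw, hu0, zero_add]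
  rw [Submodule.mem_sup] at hw
  obtain ⟨x', hx', y, hy, hxy⟩ := hw
  have hθy : θa y = 0 := hy.2
  refine ⟨x' + x', add_mem hx' hx', ?_⟩
  have hθz : θa (θa y₀) = θa x' := by
    rw [hzw, ← hxy, map_add, hθy, add_zero]
  rw [map_add, ← hθz]
  exact hval2
end

section
/- Let (∧V, d) be a simply connected Sullivan minimal model and θ_a a derivation cycle of degree 2n−1 such that H_*(Der(∧V), D) is spanned by the homology classes [θ_a] and [θ_a, θ_a], both of which are nonzero (non-bounding). If x ∈ V^{2n−1} satisfies θ_a(x) = 1, then dx ≠ 0. -/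
variable {A : Type} [Ring A] [Algebra ℚ A]

section Statement9Aux

private lemma s9_allA {𝒜 : ℤ → Submodule ℚ A}
    (hint : DirectSum.IsInternal fun i : ℤ => 𝒜 i) {C : A → Prop}
    (h0 : C 0) (hadd : ∀ u v, C u → C v → C (u + v))
    (hmem : ∀ i : ℤ, ∀ a ∈ 𝒜 i, C a) : ∀ a : A, C a := by
  intro a
  have ha : a ∈ ⨆ i, 𝒜 i := by rw [hint.submodule_iSup_eq_top]; exact Submodule.mem_top
  exact Submodule.iSup_induction (motive := C) _ ha hmem h0 hadd

private lemma s9_smulDer {𝒜 : ℤ → Submodule ℚ A} {p : ℤ} {θ : A →ₗ[ℚ] A}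
    (h : IsDegDer 𝒜 p θ) (c : ℚ) : IsDegDer 𝒜 p (c • θ) := by
  constructor
  · intro i a ha
    simpa using Submodule.smul_mem _ c (h.maps_mem i a ha)
  · intro i j a ha b hb
    simp only [LinearMap.smul_apply]
    rw [h.leibniz i j a ha b hb, smul_mul_assoc, mul_smul_comm]
    module

private lemma s9_bracketDer {𝒜 : ℤ → Submodule ℚ A} {p q : ℤ} {θ η : A →ₗ[ℚ] A}
    (hθ : IsDegDer 𝒜 p θ) (hη : IsDegDer 𝒜 q η) (hpq : Even (p * q)) :
    IsDegDer 𝒜 (p + q) (η ∘ₗ θ - θ ∘ₗ η) := by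
  constructor
  · intro i a ha
    simp only [LinearMap.sub_apply, LinearMap.comp_apply]
    apply sub_mem
    · have h1 := hη.maps_mem (i - p) _ (hθ.maps_mem i a ha)
      have e : i - p - q = i - (p + q) := by ring
      rwa [e] at h1
    · have h1 := hθ.maps_mem (i - q) _ (hη.maps_mem i a ha)
      have e : i - q - p = i - (p + q) := by ring
      rwa [e] at h1
  · intro i j a ha b hb
    simp only [LinearMap.sub_apply, LinearMap.comp_apply]
    rw [hθ.leibniz i j a ha b hb, hη.leibniz i j a ha b hb, map_add, map_add,
        map_smul, map_smul,
        hη.leibniz (i-p) j _ (hθ.maps_mem i a ha) b hb,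
        hη.leibniz i (j-p) a ha _ (hθ.maps_mem j b hb),
        hθ.leibniz (i-q) j _ (hη.maps_mem i a ha) b hb,
        hθ.leibniz i (j-q) a ha _ (hη.maps_mem j b hb)]
    have h1 : (-1:ℚ)^((i-p)*q) = (-1:ℚ)^(i*q) := by
      have e : (i-p)*q = i*q - p*q := by ring
      rw [e, zpow_sub₀ (by norm_num : (-1:ℚ) ≠ 0), hpq.neg_one_zpow, div_one]
    have h2 : (-1:ℚ)^((i-q)*p) = (-1:ℚ)^(i*p) := by
      have e : (i-q)*p = i*p - p*q := by ring
      rw [e, zpow_sub₀ (by norm_num : (-1:ℚ) ≠ 0), hpq.neg_one_zpow, div_one]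
    have h3 : (-1:ℚ)^(i*(p+q)) = (-1:ℚ)^(i*p) * (-1:ℚ)^(i*q) := by
      rw [← zpow_add₀ (by norm_num : (-1:ℚ) ≠ 0)]
      congr 1; ring
    rw [h1, h2, h3]
    simp only [mul_sub, sub_mul, smul_sub, smul_add]
    module

end Statement9Aux

/-- (Lemma `dx`.) If `[θa]` and `[θa, θa]` are nonzero and span
`H_*(Der(∧V), D)`, and `x ∈ V^{2n−1}` satisfies `θa(x) = 1`, then `dx ≠ 0`. -/
theorem statement9 (A : Type) [Ring A] [Algebra ℚ A]
    (𝒜 V : ℤ → Submodule ℚ A) (d : A →ₗ[ℚ] A)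
    (hS : SullivanData 𝒜 V d)
    (n : ℕ) (θa : A →ₗ[ℚ] A) (hθa : IsDerCycle 𝒜 d (2 * (n : ℤ) - 1) θa)
    (hnb₁ : ¬ ∃ η : A →ₗ[ℚ] A, IsDegDer 𝒜 (2 * (n : ℤ)) η ∧
      θa = Dcomm d η (2 * (n : ℤ)))
    (hnb₂ : ¬ ∃ η : A →ₗ[ℚ] A, IsDegDer 𝒜 (4 * (n : ℤ) - 1) η ∧
      gBracket θa θa (2 * (n : ℤ) - 1) (2 * (n : ℤ) - 1) = Dcomm d η (4 * (n : ℤ) - 1))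
    (hspan : ∀ p : ℤ, 1 ≤ p → ∀ θ : A →ₗ[ℚ] A, IsDerCycle 𝒜 d p θ →
      ∃ (c₁ c₂ : ℚ) (η : A →ₗ[ℚ] A), IsDegDer 𝒜 (p + 1) η ∧
        θ = c₁ • θa + c₂ • gBracket θa θa (2 * (n : ℤ) - 1) (2 * (n : ℤ) - 1)
          + Dcomm d η (p + 1))
    (x : A) (hx : x ∈ V (2 * (n : ℤ) - 1)) (hθax : θa x = 1) :
    d x ≠ 0 := by
  intro hdx
  set m : ℤ := 2 * (n : ℤ) - 1 with hm
  -- A is nontrivial, since otherwise hnb₁ fails trivially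
  have hnt : Nontrivial A := by
    by_contra hs
    rw [not_nontrivial_iff_subsingleton] at hs
    refine hnb₁ ⟨0, ⟨?_, ?_⟩, ?_⟩
    · intro i a _
      simpa using (𝒜 (i - 2 * (n : ℤ))).zero_mem
    · intro i j a _ b _
      simp
    · exact LinearMap.ext fun a => Subsingleton.elim _ _
  -- n ≥ 1
  have hxm : x ∈ 𝒜 m := hS.V_le m hx
  have hn1 : 1 ≤ n := by
    rcases Nat.eq_zero_or_pos n with h0 | h
    · exfalso
      have hb : 𝒜 m = ⊥ := hS.neg_bot m (by omega)
      rw [hb, Submodule.mem_bot] at hxm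
      rw [hxm, map_zero] at hθax
      exact one_ne_zero hθax.symm
    · exact h
  have hmodd : Odd m := ⟨(n : ℤ) - 1, by rw [hm]; ring⟩
  have εm : (-1:ℚ) ^ m = -1 := hmodd.neg_one_zpow
  have εmm : (-1:ℚ) ^ (m * m) = -1 := (hmodd.mul hmodd).neg_one_zpow
  -- θa 1 = 0
  have hθa1 : θa 1 = 0 := by
    have h := hθa.1.leibniz 0 0 1 hS.one_mem 1 hS.one_mem
    simp only [one_mul, mul_one, zero_mul, zpow_zero, one_smul] at h
    exact left_eq_add.mp h
  -- d ∘ θa = -θa ∘ d pointwise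
  have hdθa : ∀ c : A, d (θa c) = -θa (d c) := by
    intro c
    have h := LinearMap.congr_fun hθa.2 c
    simp only [Dcomm, LinearMap.sub_apply, LinearMap.comp_apply, LinearMap.smul_apply,
      LinearMap.zero_apply, εm, neg_one_smul, sub_neg_eq_add] at h
    exact eq_neg_of_add_eq_zero_left h
  -- θa (x * c) = c - x * θa c
  have hxc : ∀ c : A, θa (x * c) = c - x * θa c := by
    refine s9_allA hS.internal ?_ ?_ ?_
    · simp
    · intro u v hu hv
      rw [mul_add, map_add, hu, hv, map_add, mul_add]
      abel
    · intro j c hc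
      rw [hθa.1.leibniz m j x hxm c hc, hθax, one_mul, εmm, neg_one_smul]
      abel
  -- d (x * c) = -(x * d c)  (uses dx = 0)
  have hdxc : ∀ c : A, d (x * c) = -(x * d c) := by
    refine s9_allA hS.internal ?_ ?_ ?_
    · simp
    · intro u v hu hv
      rw [mul_add, map_add, hu, hv, map_add, mul_add]
      abel
    · intro j c hc
      rw [hS.d_der.leibniz m j x hxm c hc, hdx, zero_mul, zero_add]
      have hodd' : (-1:ℚ) ^ (m * (-1:ℤ)) = -1 := by
        have e : m * (-1:ℤ) = -m := by ring
        rw [e]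
        exact hmodd.neg.neg_one_zpow
      rw [hodd', neg_one_smul]
  -- the derivation φ = x · θa²
  set φ : A →ₗ[ℚ] A := LinearMap.mulLeft ℚ x ∘ₗ (θa ∘ₗ θa) with hφ
  have hφapp : ∀ c : A, φ c = x * θa (θa c) := by
    intro c
    rw [hφ]
    simp [LinearMap.mulLeft_apply]
  have hθ2d : ∀ c : A, θa (θa (d c)) = d (θa (θa c)) := by
    intro c
    rw [hdθa (θa c), hdθa c, map_neg, neg_neg]
  have h2im : ∀ i : ℤ, (-1:ℚ) ^ (i * m) * (-1:ℚ) ^ (i * m) = 1 := by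
    intro i
    rw [← zpow_add₀ (by norm_num : (-1:ℚ) ≠ 0)]
    exact Even.neg_one_zpow ⟨i * m, by ring⟩
  have hφder : IsDegDer 𝒜 m φ := by
    constructor
    · intro i a ha
      have h1 := hθa.1.maps_mem (i - m) _ (hθa.1.maps_mem i a ha)
      have h2 := hS.mul_mem m (i - m - m) x hxm _ h1
      have e : m + (i - m - m) = i - m := by ring
      rw [e] at h2
      rw [hφapp a]
      exact h2
    · intro i j a ha b hb
      have hθ2ab : θa (θa (a * b)) = θa (θa a) * b + a * θa (θa b) := by
        rw [hθa.1.leibniz i j a ha b hb, map_add, map_smul,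
            hθa.1.leibniz (i - m) j _ (hθa.1.maps_mem i a ha) b hb,
            hθa.1.leibniz i (j - m) a ha _ (hθa.1.maps_mem j b hb)]
        have h1 : (-1:ℚ) ^ ((i - m) * m) = -((-1:ℚ) ^ (i * m)) := by
          have e : (i - m) * m = i * m - m * m := by ring
          rw [e, zpow_sub₀ (by norm_num : (-1:ℚ) ≠ 0), εmm]
          field_simp
        rw [h1, smul_add, smul_smul, h2im i, one_smul, neg_smul]
        abel
      have hax : a * x = ((-1:ℚ) ^ (i * m)) • (x * a) := hS.gcomm i m a ha x hxm
      have h5 : a * (x * θa (θa b)) = ((-1:ℚ) ^ (i * m)) • (x * (a * θa (θa b))) := by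
        rw [← mul_assoc, hax, smul_mul_assoc, mul_assoc]
      rw [hφapp (a * b), hφapp a, hφapp b, hθ2ab, mul_add, h5, smul_smul, h2im i,
        one_smul, ← mul_assoc]
  have hφcyc : Dcomm d φ m = 0 := by
    ext c
    simp only [Dcomm, LinearMap.sub_apply, LinearMap.comp_apply, LinearMap.smul_apply,
      LinearMap.zero_apply, LinearMap.add_apply, εm, neg_one_smul, sub_neg_eq_add]
    rw [hφapp c, hφapp (d c), hdxc (θa (θa c)), ← hθ2d c]
    abel
  -- apply the spanning hypothesis
  obtain ⟨c₁, c₂, η, hη, heq⟩ := hspan m (by omega) φ ⟨hφder, hφcyc⟩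
  -- distinct graded pieces intersect trivially
  have hdisj : ∀ j k : ℤ, j ≠ k → ∀ u : A, u ∈ 𝒜 j → u ∈ 𝒜 k → u = 0 := by
    intro j k hjk u hj hk
    exact Submodule.disjoint_def.mp
      (hS.internal.submodule_iSupIndep.pairwiseDisjoint hjk) u hj hk
  -- degree separation: φ = c₁ • θa + Dη
  have key : ∀ a : A, φ a = c₁ • θa a + Dcomm d η (m + 1) a := by
    refine s9_allA hS.internal ?_ ?_ ?_
    · simp
    · intro u v hu hv
      rw [map_add, hu, hv, map_add, map_add, smul_add]
      abel
    · intro i a ha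
      have h := LinearMap.congr_fun heq a
      simp only [LinearMap.add_apply, LinearMap.smul_apply] at h
      have hDη : Dcomm d η (m + 1) a ∈ 𝒜 (i - m) := by
        simp only [Dcomm, LinearMap.sub_apply, LinearMap.comp_apply, LinearMap.smul_apply]
        apply sub_mem
        · have h1 := hS.d_der.maps_mem (i - (m + 1)) _ (hη.maps_mem i a ha)
          have e : i - (m + 1) - (-1) = i - m := by ring
          rwa [e] at h1
        · apply Submodule.smul_mem
          have h1 := hη.maps_mem (i - (-1)) _ (hS.d_der.maps_mem i a ha)
          have e : i - (-1) - (m + 1) = i - m := by ring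
          rwa [e] at h1
      have hu : φ a - (c₁ • θa a + Dcomm d η (m + 1) a) ∈ 𝒜 (i - m) :=
        sub_mem (hφder.maps_mem i a ha)
          (add_mem (Submodule.smul_mem _ _ (hθa.1.maps_mem i a ha)) hDη)
      have hgb : gBracket θa θa m m a ∈ 𝒜 (i - (m + m)) := by
        simp only [gBracket, LinearMap.sub_apply, LinearMap.comp_apply, LinearMap.smul_apply]
        have h1 := hθa.1.maps_mem (i - m) _ (hθa.1.maps_mem i a ha)
        have e : i - m - m = i - (m + m) := by ring
        rw [e] at h1
        exact sub_mem h1 (Submodule.smul_mem _ _ h1)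
      have hv : φ a - (c₁ • θa a + Dcomm d η (m + 1) a) ∈ 𝒜 (i - (m + m)) := by
        have e : φ a - (c₁ • θa a + Dcomm d η (m + 1) a) = c₂ • gBracket θa θa m m a := by
          rw [h]; abel
        rw [e]
        exact Submodule.smul_mem _ _ hgb
      have h0 : φ a - (c₁ • θa a + Dcomm d η (m + 1) a) = 0 :=
        hdisj _ _ (by omega) _ hu hv
      exact sub_eq_zero.mp h0
  -- c₁ = 0 by evaluating at x
  have hηx : η x = 0 := by
    have h1 := hη.maps_mem m x hxm
    have e : m - (m + 1) = (-1 : ℤ) := by ring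
    rw [e, hS.neg_bot (-1) (by norm_num), Submodule.mem_bot] at h1
    exact h1
  have hφx : φ x = 0 := by rw [hφapp x, hθax, hθa1, mul_zero]
  have hc₁ : c₁ = 0 := by
    have h := key x
    rw [hφx, hθax] at h
    simp only [Dcomm, LinearMap.sub_apply, LinearMap.comp_apply, LinearMap.smul_apply] at h
    rw [hηx, map_zero, hdx, map_zero, smul_zero, sub_zero, add_zero] at h
    by_contra hc
    have hone : (1 : A) = 0 := by
      calc (1 : A) = c₁⁻¹ • (c₁ • (1 : A)) := by
            rw [smul_smul, inv_mul_cancel₀ hc, one_smul]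
        _ = 0 := by rw [← h, smul_zero]
    exact one_ne_zero hone
  have keyφ : ∀ a : A, φ a = Dcomm d η (m + 1) a := by
    intro a
    rw [key a, hc₁, zero_smul, zero_add]
  -- the key identity θa(φ b) + φ(θa b) = θa(θa b)
  have keyid : ∀ b : A, θa (φ b) + φ (θa b) = θa (θa b) := by
    intro b
    rw [hφapp b, hφapp (θa b), hxc (θa (θa b))]
    abel
  -- Dη pointwise
  have hDηpt : ∀ c : A, Dcomm d η (m + 1) c = d (η c) - η (d c) := by
    intro c
    simp only [Dcomm, LinearMap.sub_apply, LinearMap.comp_apply, LinearMap.smul_apply]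
    have e : (-1:ℚ) ^ (m + 1) = 1 := Even.neg_one_zpow ⟨(n : ℤ), by omega⟩
    rw [e, one_smul]
  -- the bounding derivation
  have hξder := s9_bracketDer hθa.1 hη (Int.even_mul_succ_self m)
  have e4 : m + (m + 1) = 4 * (n : ℤ) - 1 := by omega
  rw [e4] at hξder
  have hfinal : gBracket θa θa m m
      = Dcomm d ((2 : ℚ) • (η ∘ₗ θa - θa ∘ₗ η)) (4 * (n : ℤ) - 1) := by
    ext b
    have hodd : (-1:ℚ) ^ (4 * (n : ℤ) - 1) = -1 :=
      Odd.neg_one_zpow ⟨2 * (n : ℤ) - 1, by ring⟩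
    simp only [gBracket, Dcomm, LinearMap.sub_apply, LinearMap.comp_apply,
      LinearMap.smul_apply, LinearMap.add_apply, εmm, hodd, neg_one_smul, sub_neg_eq_add]
    have h1 : θa (d b) = -d (θa b) := by rw [hdθa b, neg_neg]
    have hstep : d (η (θa b) - θa (η b)) + (η (θa (d b)) - θa (η (d b)))
        = θa (θa b) := by
      have h2 := keyid b
      have h3 : φ (θa b) = d (η (θa b)) - η (d (θa b)) := by
        rw [keyφ (θa b), hDηpt (θa b)]
      have h4 : φ b = d (η b) - η (d b) := by rw [keyφ b, hDηpt b]
      rw [h3, h4, map_sub] at h2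
      rw [map_sub, hdθa (η b), h1, map_neg, ← h2]
      abel
    rw [map_smul, ← smul_add, hstep, two_smul]
  exact hnb₂ ⟨(2 : ℚ) • (η ∘ₗ θa - θa ∘ₗ η), s9_smulDer hξder 2, hfinal⟩
end
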